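/- arXiv:2406.06082 — 8 statements merged into one kernel-verified Lean document; each statement's English description precedes it below -/
import Mathlib

section
/- Let G be a topological group, Q a dense subgroup of G, and 𝒱 a basis of open neighbourhoods of the identity of G. Define rk_{Q,𝒱}(V,U) by the same recursion as rk(V,U), except that in the clause for ordinals β > 0 the witnessing open identity neighbourhood W is required to belong to 𝒱 and the condition rk_{Q,𝒱}(V, gWg⁻¹) < β is required only for g ∈ Q ∩ U. Then for all open identity neighbourhoods U, V of G and every ordinal β: rk(V,U) ≤ β if and only if rk_{Q,𝒱}(V,U) ≤ β; in particular rk(V,U) = rk_{Q,𝒱}(V,U). -/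
/-!
Shrinking `W` only shrinks the sets `g W g⁻¹`, and the rank is antitone in its second
argument, so a witness of `rk(V, U) ≤ β` can be replaced by a member of the basis `𝒱`, and
restricting `g` to `Q ∩ U` only weakens the requirement.

Conversely, for `W ∈ 𝒱` choose an open identity neighbourhood `O` with `w⁻¹ O w ⊆ W` for
all `w ∈ O`. For `g ∈ U`, density of `Q` in the open set `U ∩ g O` gives `q = g w` with
`q ∈ Q ∩ U` and `w ∈ O`, whence `g O g⁻¹ = q (w⁻¹ O w) q⁻¹ ⊆ q W q⁻¹`. So `O` witnesses the
unrestricted rank bound, by induction on `β`.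
-/

universe u v w x

def conjSet {G : Type u} [Group G] (g : G) (W : Set G) : Set G :=
  (fun x => g * x * g⁻¹) '' W

/-- `RkLe V U β` asserts that the ordinal rank `rk(V, U)` is at most `β`:
either `U ⊆ V` (rank `0`), or there is an open identity neighbourhood `W`
such that `rk(V, g W g⁻¹) < β` for every `g ∈ U`. -/
def RkLe {G : Type u} [Group G] [TopologicalSpace G] (V U : Set G) (β : Ordinal.{v}) : Prop :=
  U ⊆ V ∨ ∃ W : Set G, IsOpen W ∧ (1 : G) ∈ W ∧
    ∀ g ∈ U, ∃ γ : Ordinal.{v}, ∃ _ : γ < β, RkLe V (conjSet g W) γ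
termination_by β

/-- The rank `rk_{Q,𝒱}(V, U)` computed relative to a subset `Q` of the group and a
family `𝒱` of identity neighbourhoods: in the recursive clause the witness `W` must
belong to `𝒱` and the condition is only required for `g ∈ Q ∩ U`. -/
def RkLeB {G : Type u} [Group G] [TopologicalSpace G] (Q : Set G) (𝒱 : Set (Set G))
    (V U : Set G) (β : Ordinal.{v}) : Prop :=
  U ⊆ V ∨ ∃ W ∈ 𝒱,
    ∀ g ∈ Q ∩ U, ∃ γ : Ordinal.{v}, ∃ _ : γ < β, RkLeB Q 𝒱 V (conjSet g W) γ
termination_by β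

open Topology

section Conj

variable {G : Type u} [Group G]

lemma conjSet_mono (g : G) {W W' : Set G} (h : W' ⊆ W) : conjSet g W' ⊆ conjSet g W :=
  Set.image_mono h

lemma conjSet_mul (g h : G) (W : Set G) : conjSet (g * h) W = conjSet g (conjSet h W) := by
  simp only [conjSet, Set.image_image]
  congr 1
  funext x
  group

lemma IsOpen.conjSet [TopologicalSpace G] [IsTopologicalGroup G] (g : G) {W : Set G}
    (h : IsOpen W) : IsOpen (conjSet g W) := by
  rw [_root_.conjSet, ← Set.image_image (· * g⁻¹) (g * ·)]
  exact isOpenMap_mul_right g⁻¹ _ (isOpenMap_mul_left g _ h)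

lemma exists_isOpen_one_mem_conjSet_inv_subset [TopologicalSpace G] [IsTopologicalGroup G]
    {W : Set G} (hW : W ∈ 𝓝 1) :
    ∃ O : Set G, IsOpen O ∧ (1 : G) ∈ O ∧ ∀ w ∈ O, conjSet w⁻¹ O ⊆ W := by
  have hcont : Continuous fun p : G × G => p.1⁻¹ * p.2 * p.1 := by fun_prop
  have hpre : (fun p : G × G => p.1⁻¹ * p.2 * p.1) ⁻¹' W ∈ 𝓝 1 ×ˢ 𝓝 1 := by
    rw [← nhds_prod_eq]
    exact hcont.continuousAt.preimage_mem_nhds (by simpa using hW)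
  obtain ⟨t, ht, htW⟩ := Filter.mem_prod_self_iff.mp hpre
  obtain ⟨O, hOt, hOo, hO1⟩ := mem_nhds_iff.mp ht
  refine ⟨O, hOo, hO1, fun w hw => ?_⟩
  rintro _ ⟨x, hx, rfl⟩
  simpa using htW (Set.mk_mem_prod (hOt hw) (hOt hx))

end Conj

section Rank

variable {G : Type u} [Group G] [TopologicalSpace G]

lemma RkLe.of_subset {V U U' : Set G} {β : Ordinal.{v}} (h : U' ⊆ U) (hr : RkLe V U β) :
    RkLe V U' β := by
  rw [RkLe] at hr ⊢
  rcases hr with hUV | ⟨W, hWo, hW1, hW⟩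
  · exact Or.inl (h.trans hUV)
  · exact Or.inr ⟨W, hWo, hW1, fun g hg => hW g (h hg)⟩

lemma rkLeB_of_rkLe (Q : Set G) {𝒱 : Set (Set G)}
    (h𝒱basis : ∀ S : Set G, IsOpen S → (1 : G) ∈ S → ∃ W ∈ 𝒱, W ⊆ S)
    {V U : Set G} {β : Ordinal.{v}} (h : RkLe V U β) : RkLeB Q 𝒱 V U β := by
  induction β using WellFoundedLT.induction generalizing U with
  | _ β IH =>
    rw [RkLe] at h
    rw [RkLeB]
    rcases h with hUV | ⟨W, hWo, hW1, hW⟩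
    · exact Or.inl hUV
    · obtain ⟨W', hW'𝒱, hW'W⟩ := h𝒱basis W hWo hW1
      refine Or.inr ⟨W', hW'𝒱, fun g hg => ?_⟩
      obtain ⟨γ, hγ, hrk⟩ := hW g hg.2
      exact ⟨γ, hγ, IH γ hγ (hrk.of_subset (conjSet_mono g hW'W))⟩

variable [IsTopologicalGroup G]

lemma Dense.exists_mem_inter_inv_mul_mem {Q U O : Set G} (hQ : Dense Q) (hUo : IsOpen U)
    (hOo : IsOpen O) (hO1 : (1 : G) ∈ O) {g : G} (hg : g ∈ U) :
    ∃ q ∈ Q ∩ U, g⁻¹ * q ∈ O := by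
  obtain ⟨q, hqQ, hqU, hqO⟩ := hQ.exists_mem_open
    (hUo.inter (hOo.preimage (continuous_const_mul g⁻¹))) ⟨g, hg, by simpa using hO1⟩
  exact ⟨q, ⟨hqQ, hqU⟩, hqO⟩

lemma rkLe_of_rkLeB {Q : Set G} (hQ : Dense Q) {𝒱 : Set (Set G)}
    (h𝒱 : ∀ W ∈ 𝒱, IsOpen W ∧ (1 : G) ∈ W)
    {V U : Set G} (hUo : IsOpen U) {β : Ordinal.{v}} (h : RkLeB Q 𝒱 V U β) : RkLe V U β := by
  induction β using WellFoundedLT.induction generalizing U with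
  | _ β IH =>
    rw [RkLeB] at h
    rw [RkLe]
    rcases h with hUV | ⟨W, hW𝒱, hW⟩
    · exact Or.inl hUV
    · obtain ⟨hWo, hW1⟩ := h𝒱 W hW𝒱
      obtain ⟨O, hOo, hO1, hOW⟩ := exists_isOpen_one_mem_conjSet_inv_subset (hWo.mem_nhds hW1)
      refine Or.inr ⟨O, hOo, hO1, fun g hg => ?_⟩
      obtain ⟨q, hq, hw⟩ := hQ.exists_mem_inter_inv_mul_mem hUo hOo hO1 hg
      obtain ⟨γ, hγ, hrk⟩ := hW q hq
      have hgO : conjSet g O ⊆ conjSet q W := by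
        have hg_eq : g = q * (g⁻¹ * q)⁻¹ := by group
        rw [hg_eq, conjSet_mul]
        exact conjSet_mono q (hOW _ hw)
      exact ⟨γ, hγ, (IH γ hγ (hWo.conjSet q) hrk).of_subset hgO⟩

end Rank

theorem rk_eq_rk_of_dense_of_basis_general {G : Type u} [Group G] [TopologicalSpace G]
    [IsTopologicalGroup G] (Q : Subgroup G) (hQ : Dense (Q : Set G)) (𝒱 : Set (Set G))
    (h𝒱 : ∀ W ∈ 𝒱, IsOpen W ∧ (1 : G) ∈ W)
    (h𝒱basis : ∀ S : Set G, IsOpen S → (1 : G) ∈ S → ∃ W ∈ 𝒱, W ⊆ S)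
    (U V : Set G) (hUo : IsOpen U)
    (β : Ordinal.{v}) :
    RkLe V U β ↔ RkLeB (Q : Set G) 𝒱 V U β :=
  ⟨rkLeB_of_rkLe _ h𝒱basis, rkLe_of_rkLeB hQ h𝒱 hUo⟩

/-- If `Q` is a dense subgroup of `G` and `𝒱` is a basis of open identity neighbourhoods,
then `rk(V, U) = rk_{Q,𝒱}(V, U)` for all open identity neighbourhoods `U, V`. -/
theorem rk_eq_rk_of_dense_of_basis {G : Type u} [Group G] [TopologicalSpace G]
    [IsTopologicalGroup G] (Q : Subgroup G) (hQ : Dense (Q : Set G)) (𝒱 : Set (Set G))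
    (h𝒱 : ∀ W ∈ 𝒱, IsOpen W ∧ (1 : G) ∈ W)
    (h𝒱basis : ∀ S : Set G, IsOpen S → (1 : G) ∈ S → ∃ W ∈ 𝒱, W ⊆ S)
    (U V : Set G) (hUo : IsOpen U) (hU1 : (1 : G) ∈ U) (hVo : IsOpen V) (hV1 : (1 : G) ∈ V)
    (β : Ordinal.{v}) :
    RkLe V U β ↔ RkLeB (Q : Set G) 𝒱 V U β :=
  rk_eq_rk_of_dense_of_basis_general Q hQ 𝒱 h𝒱 h𝒱basis U V hUo β
end

section
/- Let G be a second-countable metrizable topological group and let U, V be open neighbourhoods of the identity. If rk(V,U) ≤ β for some ordinal β, then rk(V,U) ≤ γ for some countable ordinal γ. -/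
/-!
Induction on the bound `β`. If `rk(V, U) ≤ β` is witnessed by `W`, choose an open `W₀ ∋ 1`
with `a W₀ a⁻¹ ⊆ W` for `a ∈ W₀`. Then `h⁻¹ g ∈ W₀` gives `g W₀ g⁻¹ ⊆ h W h⁻¹`, so the
Lindelöf property lets countably many `h ∈ U` serve all `g ∈ U`. By induction each
`rk(V, h W h⁻¹)` is below `ω₁`, and a countable family of countable ordinals is bounded
below `ω₁`, so `W₀` witnesses a countable bound for `rk(V, U)`.
-/

universe u v w x

open Filter Topology Ordinal Cardinal

theorem Ordinal.exists_lt_omega_one_forall_lt {ι : Type u} [Countable ι] {f : ι → Ordinal.{v}}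
    (hf : ∀ i, f i < ω₁) : ∃ δ < ω₁, ∀ i, f i < δ :=
  ⟨Order.succ (⨆ i, f i), (isSuccLimit_omega 1).succ_lt (iSup_lt_omega_one hf),
    fun i => Order.lt_succ_iff.mpr (Ordinal.le_iSup f i)⟩

section Rank

variable {G : Type u} [Group G]

theorem conjSet_subset_conjSet {W₀ W : Set G} {g h : G} (hgh : h⁻¹ * g ∈ W₀)
    (hconj : ∀ a ∈ W₀, ∀ x ∈ W₀, a * x * a⁻¹ ∈ W) : conjSet g W₀ ⊆ conjSet h W := by
  rintro _ ⟨x, hx, rfl⟩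
  exact ⟨(h⁻¹ * g) * x * (h⁻¹ * g)⁻¹, hconj _ hgh _ hx, by group⟩

variable [TopologicalSpace G]

theorem RkLe.subset {V U U' : Set G} {β : Ordinal.{v}} (h : RkLe V U β) (hU : U' ⊆ U) :
    RkLe V U' β := by
  rw [RkLe] at h ⊢
  rcases h with h | ⟨W, hWo, hW1, hW⟩
  · exact Or.inl (hU.trans h)
  · exact Or.inr ⟨W, hWo, hW1, fun g hg => hW g (hU hg)⟩

theorem exists_isOpen_one_mem_conj_mem [IsTopologicalGroup G] {W : Set G} (hW : W ∈ 𝓝 1) :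
    ∃ W₀ : Set G, IsOpen W₀ ∧ (1 : G) ∈ W₀ ∧ ∀ a ∈ W₀, ∀ x ∈ W₀, a * x * a⁻¹ ∈ W := by
  have hcont : Tendsto (fun p : G × G => p.1 * p.2 * p.1⁻¹) (𝓝 1 ×ˢ 𝓝 1) (𝓝 1) := by
    rw [← nhds_prod_eq]
    simpa using (show Continuous fun p : G × G => p.1 * p.2 * p.1⁻¹ by fun_prop).tendsto (1, 1)
  obtain ⟨W₀, ⟨hW₀1, hW₀o⟩, hW₀⟩ := ((nhds_basis_opens (1 : G)).prod_self.mem_iff).mp (hcont hW)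
  exact ⟨W₀, hW₀o, hW₀1, fun a ha x hx => by simpa using hW₀ (Set.mk_mem_prod ha hx)⟩

theorem RkLe.exists_lt_omega_one [IsTopologicalGroup G] [HereditarilyLindelofSpace G]
    {V U : Set G} {β : Ordinal.{v}} (h : RkLe V U β) : ∃ γ < ω₁, RkLe V U γ := by
  induction β using WellFoundedLT.induction generalizing U with
  | _ β IH =>
  rw [RkLe] at h
  rcases h with hUV | ⟨W, hWo, hW1, hW⟩
  · exact ⟨0, omega_pos 1, by rw [RkLe]; exact Or.inl hUV⟩
  obtain ⟨W₀, hW₀o, hW₀1, hconj⟩ := exists_isOpen_one_mem_conj_mem (hWo.mem_nhds hW1)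
  obtain ⟨T, hTc, hTU, hUT⟩ := (HereditarilyLindelofSpace.isLindelof U).elim_nhds_subcover
    (fun h => (h * ·) '' W₀) fun h _ => (isOpenMap_mul_left h W₀ hW₀o).mem_nhds ⟨1, hW₀1, mul_one h⟩
  have hconjRk : ∀ h : T, ∃ δ < ω₁, RkLe V (conjSet (h : G) W) δ := fun h => by
    obtain ⟨γ, hγ, hγrk⟩ := hW h (hTU h h.2)
    exact IH γ hγ hγrk
  choose δ hδω hδ using hconjRk
  have : Countable T := hTc.to_subtype
  obtain ⟨γ, hγω, hδγ⟩ := exists_lt_omega_one_forall_lt hδω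
  refine ⟨γ, hγω, ?_⟩
  rw [RkLe]
  refine Or.inr ⟨W₀, hW₀o, hW₀1, fun g hg => ?_⟩
  obtain ⟨h, hT, x, hx, rfl⟩ := Set.mem_iUnion₂.mp (hUT hg)
  have hgh : h⁻¹ * (h * x) ∈ W₀ := by rwa [inv_mul_cancel_left]
  exact ⟨δ ⟨h, hT⟩, hδγ _, (hδ ⟨h, hT⟩).subset (conjSet_subset_conjSet hgh hconj)⟩

end Rank

theorem rkLe_countable_of_rkLe_general {G : Type u} [Group G] [TopologicalSpace G]
    [IsTopologicalGroup G]
    [SecondCountableTopology G]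
    (U V : Set G)
    (β : Ordinal.{v}) (h : RkLe V U β) :
    ∃ γ : Ordinal.{v}, γ.card ≤ Cardinal.aleph0 ∧ RkLe V U γ := by
  obtain ⟨γ, hγ, hrk⟩ := h.exists_lt_omega_one
  exact ⟨γ, Cardinal.lt_aleph_one_iff.mp (lt_omega_iff_card_lt.mp hγ), hrk⟩

/-- In a second-countable metrizable topological group, if `rk(V, U)` is bounded by an
ordinal then it is bounded by a countable ordinal. -/
theorem rkLe_countable_of_rkLe {G : Type u} [Group G] [TopologicalSpace G]
    [IsTopologicalGroup G] [TopologicalSpace.MetrizableSpace G]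
    [SecondCountableTopology G]
    (U V : Set G) (hUo : IsOpen U) (hU1 : (1 : G) ∈ U) (hVo : IsOpen V) (hV1 : (1 : G) ∈ V)
    (β : Ordinal.{v}) (h : RkLe V U β) :
    ∃ γ : Ordinal.{v}, γ.card ≤ Cardinal.aleph0 ∧ RkLe V U γ :=
  rkLe_countable_of_rkLe_general U V β h
end

section
/- Let G be a Polish group. The following are equivalent: (1) G is CLI; (2) for every open identity neighbourhood V of G there is an ordinal α with rk(V, G) ≤ α (i.e., rk(G) < ∞); (3) there is a countable ordinal α such that G is α-balanced (i.e., rk(G) < ω₁). -/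
universe u v w x

/-- `rk(G) ≤ α`, i.e. the topological group `G` is `α`-balanced:
`rk(V, G) + 1 ≤ α` for every open identity neighbourhood `V`. -/
def IsBalanced (G : Type u) [Group G] [TopologicalSpace G] (α : Ordinal.{v}) : Prop :=
  ∀ V : Set G, IsOpen V → (1 : G) ∈ V → ∃ β : Ordinal.{v}, β < α ∧ RkLe V Set.univ β

/-- `rk(G) = α`: the least `α` such that `G` is `α`-balanced. -/
def HasRk (G : Type u) [Group G] [TopologicalSpace G] (α : Ordinal.{v}) : Prop :=
  IsBalanced G α ∧ ∀ β : Ordinal.{v}, β < α → ¬IsBalanced G β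

/-- A topological group is CLI if it admits a metric, compatible with its topology,
that is complete and left-invariant. -/
def IsCLI (G : Type u) [Group G] [t : TopologicalSpace G] : Prop :=
  ∃ m : MetricSpace G,
    m.toPseudoMetricSpace.toUniformSpace.toTopologicalSpace = t ∧
    @CompleteSpace G m.toPseudoMetricSpace.toUniformSpace ∧
    ∀ g h h' : G,
      @dist G m.toPseudoMetricSpace.toDist (g * h) (g * h') =
        @dist G m.toPseudoMetricSpace.toDist h h'

/-!
`(1) ⇒ (3)`. Fix a complete left-invariant metric and a dense sequence `e`. Index the conjugated
balls `e k · B(1, 4⁻ⁿ) · (e k)⁻¹` by `(k, n) : ℕ × ℕ`, and relate a ball that is not contained in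
`V` to the balls of a quarter of its radius centred near its centre. An infinite descending chain
would have Cauchy centres, hence would produce points outside `V` converging to `1`; so the
relation is well founded, its ranks are countable ordinals, and by induction they bound
`rk(V, ·)` on the balls. One more step covers `G`, and a countable neighbourhood basis of `1`
gives a countable bound for `rk(G)`.

`(2) ⇒ (1)`. A Polish group has a compatible left-invariant metric (the supremum of the left
translates of a metric for the left uniformity). By induction on `rk(V, U)`, a left-Cauchy
sequence that eventually lies in `U z` eventually lies in some `V z'`; so if every `rk(V, G)` is
an ordinal, left-Cauchy sequences are also right-Cauchy. Such a sequence `xₙ` converges: left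
multiplication by `xₙ` and by `xₙ⁻¹` converge pointwise on the completion `Ĝ` to mutually inverse
isometries `Φ` and `Ψ`. Since `G` is a dense `Gδ` in `Ĝ`, the Baire category theorem gives
`y ∈ G` with `Φ y ∈ G`, and then `xₙ y → Φ y` in `G`.
-/

open Filter Topology Set Metric Uniformity
open scoped Ordinal

section RkLe

variable {G : Type*} [Group G]

theorem mem_conjSet {g x : G} {W : Set G} : x ∈ conjSet g W ↔ g⁻¹ * x * g ∈ W := by
  constructor
  · rintro ⟨w, hw, rfl⟩
    simpa [mul_assoc] using hw
  · exact fun h => ⟨g⁻¹ * x * g, h, by group⟩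

variable [TopologicalSpace G]

theorem RkLe.mono {V V' U U' : Set G} {β : Ordinal} (h : RkLe V U β) (hV : V ⊆ V')
    (hU : U' ⊆ U) : RkLe V' U' β := by
  induction β using WellFoundedLT.induction generalizing U U' with
  | _ β IH =>
    rw [RkLe] at h ⊢
    refine h.imp (fun h => hU.trans (h.trans hV)) ?_
    rintro ⟨W, hW, h1W, hrec⟩
    refine ⟨W, hW, h1W, fun g hg => ?_⟩
    obtain ⟨γ, hγ, hγW⟩ := hrec g (hU hg)
    exact ⟨γ, hγ, IH γ hγ hγW subset_rfl⟩

theorem exists_lt_omega_one_isBalanced [FirstCountableTopology G]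
    (h : ∀ V : Set G, IsOpen V → (1 : G) ∈ V → ∃ β : Ordinal.{v}, β < ω₁ ∧ RkLe V univ β) :
    ∃ α : Ordinal.{v}, α < ω₁ ∧ IsBalanced G α := by
  obtain ⟨U, hU, hbasis⟩ := (nhds_basis_opens (1 : G)).exists_antitone_subbasis
  choose β hβ hβU using fun n => h (U n) (hU n).2 (hU n).1
  refine ⟨⨆ n, Order.succ (β n),
    Ordinal.iSup_lt_omega_one fun n => (Cardinal.isSuccLimit_omega 1).succ_lt (hβ n),
    fun V hV h1V => ?_⟩
  obtain ⟨n, -, hnV⟩ := hbasis.toHasBasis.mem_iff.1 (hV.mem_nhds h1V)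
  exact ⟨β n, (Order.lt_succ (β n)).trans_le (Ordinal.le_iSup (fun n => Order.succ (β n)) n),
    (hβU n).mono hnV subset_rfl⟩

end RkLe

theorem IsWellFounded.rank_lt_omega_one {α : Type*} [Countable α] (r : α → α → Prop)
    [IsWellFounded α r] (a : α) : IsWellFounded.rank r a < ω₁ := by
  induction a using IsWellFounded.induction r with
  | ind a IH =>
    rw [IsWellFounded.rank_eq]
    exact Ordinal.iSup_lt_omega_one fun b => (Cardinal.isSuccLimit_omega 1).succ_lt (IH b b.2)

section ConjBall

variable {G : Type*} [Group G] [PseudoMetricSpace G]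

/-- For a left-invariant metric this is the conjugate `conjSet a (ball 1 r)`. -/
def conjBall (a : G) (r : ℝ) : Set G := {x | dist (x * a) a < r}

theorem isOpen_conjBall [ContinuousMul G] (a : G) (r : ℝ) : IsOpen (conjBall a r) :=
  isOpen_ball.preimage (continuous_mul_const a)

theorem one_mem_conjBall (a : G) {r : ℝ} (hr : 0 < r) : (1 : G) ∈ conjBall a r := by
  simpa [conjBall] using hr

variable [IsIsometricSMul G G]

theorem conjSet_conjBall (g a : G) (r : ℝ) : conjSet g (conjBall a r) = conjBall (g * a) r := by
  ext x
  rw [mem_conjSet, conjBall, mem_ofPred_eq, ← dist_mul_left g]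
  simp only [conjBall, mem_ofPred_eq, mul_assoc, mul_inv_cancel_left]

theorem conjBall_subset_conjBall {a b : G} {r s : ℝ} (h : 2 * dist a b + r ≤ s) :
    conjBall a r ⊆ conjBall b s := fun x (hx : dist (x * a) a < r) =>
  calc dist (x * b) b ≤ dist (x * b) (x * a) + dist (x * a) a + dist a b := dist_triangle4 _ _ _ _
    _ < s := by rw [dist_mul_left, dist_comm b]; linarith

end ConjBall

section ConjBallRel

variable {G : Type*} [Group G] [MetricSpace G] {V : Set G} {e : ℕ → G}

/-- `(k, n)` stands for `conjBall (e k) (4⁻¹ ^ n)`. -/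
def ConjBallRel (V : Set G) (e : ℕ → G) (q p : ℕ × ℕ) : Prop :=
  ¬conjBall (e p.1) (4⁻¹ ^ p.2) ⊆ V ∧ q.2 = p.2 + 1 ∧ dist (e q.1) (e p.1) < 2 * 4⁻¹ ^ p.2

theorem wellFounded_conjBallRel [IsTopologicalGroup G] [CompleteSpace G] (hV : IsOpen V)
    (h1V : (1 : G) ∈ V) (e : ℕ → G) : WellFounded (ConjBallRel V e) := by
  refine wellFounded_iff_isEmpty_descending_chain.2 ⟨fun ⟨f, hf⟩ => ?_⟩
  set c : ℕ → G := fun n => e (f n).1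
  have hrad : ∀ n, (f n).2 = (f 0).2 + n := fun n => by
    induction n with
    | zero => rfl
    | succ n ih => rw [(hf n).2.1, ih, add_assoc]
  have hpow : ∀ n, (4⁻¹ : ℝ) ^ (f n).2 ≤ 4⁻¹ ^ n := fun n => by
    rw [hrad]
    exact pow_le_pow_of_le_one (by norm_num) (by norm_num) (Nat.le_add_left n _)
  have hc : CauchySeq c := cauchySeq_of_le_geometric 4⁻¹ 2 (by norm_num) fun n => by
    rw [dist_comm]
    linarith [(hf n).2.2, hpow n]
  obtain ⟨a, ha⟩ := cauchySeq_tendsto_of_complete hc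
  choose b hb hbV using fun n => not_subset.1 (hf n).1
  have hbc : Tendsto (fun n => b n * c n) atTop (𝓝 a) := by
    refine tendsto_iff_dist_tendsto_zero.2 (squeeze_zero (fun _ => dist_nonneg)
      (fun n => dist_triangle _ (c n) a) ?_)
    simpa using (squeeze_zero (fun _ => dist_nonneg) (fun n => (hb n).le.trans (hpow n))
      (tendsto_pow_atTop_nhds_zero_of_lt_one (r := (4⁻¹ : ℝ)) (by norm_num) (by norm_num))).add
      (tendsto_iff_dist_tendsto_zero.1 ha)
  have hb1 : Tendsto b atTop (𝓝 1) := by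
    simpa using hbc.mul ha.inv
  obtain ⟨n, hn⟩ := (hb1.eventually_mem (hV.mem_nhds h1V)).exists
  exact hbV n hn

variable [IsIsometricSMul G G]

theorem rkLe_conjBall_rank [ContinuousMul G] (he : DenseRange e)
    [IsWellFounded (ℕ × ℕ) (ConjBallRel V e)] (p : ℕ × ℕ) :
    RkLe V (conjBall (e p.1) (4⁻¹ ^ p.2))
      (Ordinal.lift.{v} (IsWellFounded.rank (ConjBallRel V e) p)) := by
  induction p using IsWellFounded.induction (ConjBallRel V e) with
  | ind p IH =>
    obtain ⟨k, n⟩ := p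
    rw [RkLe]
    by_cases hsub : conjBall (e k) (4⁻¹ ^ n) ⊆ V
    · exact Or.inl hsub
    have hr : (0 : ℝ) < 4⁻¹ ^ n := by positivity
    refine Or.inr ⟨conjBall (e k) (4⁻¹ ^ n / 8), isOpen_conjBall _ _,
      one_mem_conjBall _ (by positivity), fun g (hg : dist (g * e k) (e k) < 4⁻¹ ^ n) => ?_⟩
    obtain ⟨k', hk'⟩ := he.exists_dist_lt (g * e k) (show (0 : ℝ) < 4⁻¹ ^ n / 32 by positivity)
    have hrel : ConjBallRel V e (k', n + 1) (k, n) := by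
      refine ⟨hsub, rfl, show dist (e k') (e k) < 2 * 4⁻¹ ^ n from ?_⟩
      linarith [dist_triangle (e k') (g * e k) (e k), dist_comm (e k') (g * e k)]
    refine ⟨_, Ordinal.lift_lt.2 (IsWellFounded.rank_lt_of_rel hrel),
      (IH _ hrel).mono subset_rfl ?_⟩
    rw [conjSet_conjBall]
    exact conjBall_subset_conjBall (by rw [pow_succ]; linarith)

theorem exists_rkLe_univ_lt_omega_one [IsTopologicalGroup G] [CompleteSpace G]
    [TopologicalSpace.SeparableSpace G] (hV : IsOpen V) (h1V : (1 : G) ∈ V) :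
    ∃ β : Ordinal.{v}, β < ω₁ ∧ RkLe V univ β := by
  obtain ⟨e, he⟩ := TopologicalSpace.exists_dense_seq G
  have := IsWellFounded.mk (wellFounded_conjBallRel hV h1V e)
  set rank := IsWellFounded.rank (ConjBallRel V e)
  refine ⟨Ordinal.lift.{v} (⨆ p, Order.succ (rank p)), ?_, ?_⟩
  · exact Ordinal.lift_lt_omega_one.2 (Ordinal.iSup_lt_omega_one fun p =>
      (Cardinal.isSuccLimit_omega 1).succ_lt (IsWellFounded.rank_lt_omega_one _ p))
  rw [RkLe]
  refine Or.inr ⟨conjBall 1 8⁻¹, isOpen_conjBall _ _, one_mem_conjBall _ (by norm_num),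
    fun g _ => ?_⟩
  obtain ⟨k, hk⟩ := he.exists_dist_lt g (show (0 : ℝ) < 4⁻¹ by norm_num)
  refine ⟨_, Ordinal.lift_lt.2 ((Order.lt_succ (rank (k, 0))).trans_le
    (Ordinal.le_iSup (fun p => Order.succ (rank p)) (k, 0))),
    (rkLe_conjBall_rank he (k, 0)).mono subset_rfl ?_⟩
  rw [conjSet_conjBall, mul_one, pow_zero]
  exact conjBall_subset_conjBall (by linarith [dist_comm g (e k)])

end ConjBallRel

theorem IsCLI.exists_card_le_aleph0_isBalanced {G : Type*} [Group G] [t : TopologicalSpace G]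
    [IsTopologicalGroup G] [TopologicalSpace.SeparableSpace G] (h : IsCLI G) :
    ∃ α : Ordinal.{v}, α.card ≤ Cardinal.aleph0 ∧ IsBalanced G α := by
  obtain ⟨m, rfl, hcomplete, hinv⟩ := h
  let _ := m
  have : IsIsometricSMul G G := ⟨fun g => Isometry.of_dist_eq (hinv g)⟩
  obtain ⟨α, hα, hbal⟩ : ∃ α : Ordinal.{v}, α < ω₁ ∧ IsBalanced G α :=
    exists_lt_omega_one_isBalanced fun _ hV h1V => exists_rkLe_univ_lt_omega_one hV h1V
  refine ⟨α, ?_, hbal⟩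
  rwa [← Cardinal.ord_aleph, Cardinal.lt_ord, Cardinal.lt_aleph_one_iff] at hα

section LeftCauchy

variable {G : Type*} [Group G] [TopologicalSpace G] [IsTopologicalGroup G] {x : ℕ → G}

theorem RkLe.exists_eventually_mul_inv_mem
    (hx : Tendsto (fun p : ℕ × ℕ => (x p.1)⁻¹ * x p.2) atTop (𝓝 1))
    {V U : Set G} {β : Ordinal} (h : RkLe V U β) {z : G}
    (hz : ∀ᶠ n in atTop, x n * z⁻¹ ∈ U) : ∃ z', ∀ᶠ n in atTop, x n * z'⁻¹ ∈ V := by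
  induction β using WellFoundedLT.induction generalizing U z with
  | _ β IH =>
    rw [RkLe] at h
    obtain hUV | ⟨W, hW, h1W, hrec⟩ := h
    · exact ⟨z, hz.mono fun n hn => hUV hn⟩
    have hWz : (fun w => z * w * z⁻¹) ⁻¹' W ∈ 𝓝 1 :=
      (by fun_prop : Continuous fun w => z * w * z⁻¹).continuousAt.preimage_mem_nhds
        (by simpa using hW.mem_nhds h1W)
    have hxW : ∀ᶠ q : ℕ × ℕ in atTop, z * ((x q.1)⁻¹ * x q.2) * z⁻¹ ∈ W := hx hWz
    obtain ⟨N, hN⟩ := eventually_atTop_prod_self.1 hxW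
    obtain ⟨m, hmU, hNm⟩ := (hz.and (eventually_ge_atTop N)).exists
    obtain ⟨γ, hγ, hγW⟩ := hrec _ hmU
    refine IH γ hγ hγW (z := x m) ((eventually_ge_atTop m).mono fun k hk => ?_)
    exact ⟨z * ((x m)⁻¹ * x k) * z⁻¹, hN m k hNm (hNm.trans hk), by group⟩

theorem IsBalanced.tendsto_mul_inv {α : Ordinal} (h : IsBalanced G α)
    (hx : Tendsto (fun p : ℕ × ℕ => (x p.1)⁻¹ * x p.2) atTop (𝓝 1)) :
    Tendsto (fun p : ℕ × ℕ => x p.1 * (x p.2)⁻¹) atTop (𝓝 1) := by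
  rw [← prod_atTop_atTop_eq]
  intro O hO
  obtain ⟨V, hV, h1V, hVV⟩ := exists_open_nhds_one_mul_subset hO
  obtain ⟨β, -, hβ⟩ := h (V ∩ V⁻¹) (hV.inter hV.inv) ⟨h1V, by simpa using h1V⟩
  obtain ⟨z, hz⟩ := hβ.exists_eventually_mul_inv_mem hx (z := 1) (by simp)
  rw [mem_map]
  filter_upwards [hz.prod_mk hz] with p hp
  simpa [mul_assoc] using hVV (mul_mem_mul hp.1.1 (show (x p.2 * z⁻¹)⁻¹ ∈ V from hp.2.2))

end LeftCauchy

theorem cauchySeq_iff_tendsto_inv_mul {G : Type*} [Group G] [PseudoMetricSpace G]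
    [IsIsometricSMul G G] {x : ℕ → G} :
    CauchySeq x ↔ Tendsto (fun p : ℕ × ℕ => (x p.1)⁻¹ * x p.2) atTop (𝓝 1) := by
  rw [cauchySeq_iff_tendsto_dist_atTop_0,
    tendsto_iff_dist_tendsto_zero (f := fun p : ℕ × ℕ => (x p.1)⁻¹ * x p.2)]
  refine tendsto_congr fun p => ?_
  rw [← dist_mul_left (x p.1) ((x p.1)⁻¹ * x p.2), mul_inv_cancel_left, mul_one, dist_comm]

theorem Topology.IsInducing.isGδ_range {X Y : Type*} [MetricSpace X] [TopologicalSpace Y]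
    [TopologicalSpace.IsCompletelyMetrizableSpace Y] {f : Y → X} (hf : IsInducing f) :
    IsGδ (range f) := by
  let _ := TopologicalSpace.upgradeIsCompletelyMetrizable Y
  set O : ℕ → Set X := fun n => ⋃₀ {V | IsOpen V ∧
    ∀ a b, f a ∈ V → f b ∈ V → dist a b < 1 / (n + 1)}
  suffices range f = (⋂ n, O n) ∩ closure (range f) by
    rw [this]
    exact (IsGδ.iInter_of_isOpen fun n => isOpen_sUnion fun V hV => hV.1).inter
      isClosed_closure.isGδ
  refine (subset_inter (subset_iInter fun n => ?_) subset_closure).antisymm ?_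
  · rintro _ ⟨y, rfl⟩
    obtain ⟨V, hV, hVy⟩ := hf.isOpen_iff.1 (isOpen_ball (x := y) (ε := 1 / (2 * (n + 1))))
    refine ⟨V, ⟨hV, fun a b ha hb => ?_⟩, ?_⟩
    · have ha' : a ∈ ball y (1 / (2 * (n + 1))) := hVy ▸ ha
      have hb' : b ∈ ball y (1 / (2 * (n + 1))) := hVy ▸ hb
      have : 1 / (2 * ((n : ℝ) + 1)) + 1 / (2 * (n + 1)) = 1 / (n + 1) := by field_simp; ring
      rw [mem_ball] at ha' hb'
      linarith [dist_triangle_right a b y]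
    · rw [← mem_preimage, hVy]
      exact mem_ball_self (by positivity)
  · rintro x ⟨hxO, hx⟩
    choose V hV hxV using fun n => mem_sUnion.1 (mem_iInter.1 hxO n)
    have hF : Cauchy (comap f (𝓝 x)) := by
      refine Metric.cauchy_iff.2 ⟨comap_neBot fun t ht => ?_, fun ε hε => ?_⟩
      · obtain ⟨_, hz, y, rfl⟩ := mem_closure_iff_nhds.1 hx t ht
        exact ⟨y, hz⟩
      · obtain ⟨n, hn⟩ := exists_nat_one_div_lt hε
        exact ⟨f ⁻¹' V n, preimage_mem_comap ((hV n).1.mem_nhds (hxV n)),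
          fun a ha b hb => ((hV n).2 a b ha hb).trans hn⟩
    obtain ⟨y, hy⟩ := CompleteSpace.complete hF
    have : NeBot (comap f (𝓝 x)) := hF.1
    exact ⟨y, tendsto_nhds_unique ((hf.continuous.tendsto y).mono_left hy) tendsto_comap⟩

theorem Isometry.of_tendsto {X Y : Type*} [PseudoMetricSpace X] [PseudoMetricSpace Y]
    {f : ℕ → X → Y} {F : X → Y} (hf : ∀ n, Isometry (f n))
    (hF : ∀ z, Tendsto (f · z) atTop (𝓝 (F z))) : Isometry F :=
  Isometry.of_dist_eq fun a b => tendsto_nhds_unique ((hF a).dist (hF b)) <| by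
    simp only [(hf _).dist_eq, tendsto_const_nhds]

theorem Function.LeftInverse.of_tendsto {X : Type*} [PseudoMetricSpace X] [T2Space X]
    {f g : ℕ → X → X} {F G : X → X} (hf : ∀ n, Isometry (f n))
    (hF : ∀ z, Tendsto (f · z) atTop (𝓝 (F z))) (hG : ∀ z, Tendsto (g · z) atTop (𝓝 (G z)))
    (hfg : ∀ n, Function.LeftInverse (f n) (g n)) : Function.LeftInverse F G := fun z => by
  refine tendsto_nhds_unique (hF (G z)) (tendsto_iff_dist_tendsto_zero.2 ?_)
  refine (tendsto_iff_dist_tendsto_zero.1 (hG z)).congr fun n => ?_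
  calc dist (g n z) (G z) = dist (f n (G z)) (f n (g n z)) := by rw [(hf n).dist_eq, dist_comm]
    _ = dist (f n (G z)) z := by rw [hfg n z]

section IsometricAction

instance {M X : Type*} [PseudoMetricSpace X] [SMul M X] [IsIsometricSMul M X] :
    UniformContinuousConstSMul M X :=
  ⟨fun c => (isometry_smul X c).uniformContinuous⟩

instance {M X : Type*} [PseudoMetricSpace X] [SMul M X] [IsIsometricSMul M X] :
    IsIsometricSMul M (UniformSpace.Completion X) :=
  ⟨fun c => (isometry_smul X c).completion_map⟩

variable {G : Type*} [Group G] [PseudoMetricSpace G] [IsIsometricSMul G G]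

theorem uniformContinuous_smul_const {X : Type*} [PseudoMetricSpace X] [MulAction G X]
    [IsIsometricSMul G X] {z : X} (hz : Tendsto (· • z) (𝓝 (1 : G)) (𝓝 z)) :
    UniformContinuous (· • z : G → X) := by
  refine Metric.uniformContinuous_iff.2 fun ε hε => ?_
  obtain ⟨δ, hδ, h⟩ := Metric.tendsto_nhds_nhds.1 hz ε hε
  refine ⟨δ, hδ, fun {a b} hab => ?_⟩
  rw [← dist_smul b⁻¹, smul_smul, inv_smul_smul]
  exact h (by rwa [← dist_mul_left b⁻¹, inv_mul_cancel] at hab)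

theorem UniformSpace.Completion.tendsto_smul_nhds_one [ContinuousMul G] (z : Completion G) :
    Tendsto (· • z) (𝓝 (1 : G)) (𝓝 z) := by
  have hequi : Equicontinuous fun c : G => (c • · : Completion G → Completion G) :=
    (LipschitzWith.uniformEquicontinuous _ 1 fun c => (isometry_smul _ c).lipschitz).equicontinuous
  refine induction_on z (hequi.isClosed_setOfPred_tendsto continuous_id) fun y => ?_
  simp only [← coe_smul, smul_eq_mul]
  exact (continuous_coe G).continuousAt.tendsto.comp
    ((continuous_mul_const y).tendsto' 1 y (one_mul y))

end IsometricAction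

open UniformSpace in
theorem exists_tendsto_of_cauchySeq_of_cauchySeq_inv {G : Type*} [Group G] [MetricSpace G]
    [IsIsometricSMul G G] [ContinuousMul G] [PolishSpace G] {x : ℕ → G} (hx : CauchySeq x)
    (hx' : CauchySeq fun n => (x n)⁻¹) : ∃ a, Tendsto x atTop (𝓝 a) := by
  have hcauchy : ∀ {y : ℕ → G}, CauchySeq y → ∀ z : Completion G, CauchySeq (y · • z) :=
    fun hy z =>
      (uniformContinuous_smul_const (Completion.tendsto_smul_nhds_one z)).comp_cauchySeq hy
  choose Φ hΦ using fun z => cauchySeq_tendsto_of_complete (hcauchy hx z)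
  choose Ψ hΨ using fun z => cauchySeq_tendsto_of_complete (hcauchy hx' z)
  have hΦΨ : Function.LeftInverse Φ Ψ := .of_tendsto (fun _ => isometry_smul _ _) hΦ hΨ
    fun n => smul_inv_smul (x n)
  have hΨΦ : Function.LeftInverse Ψ Φ := .of_tendsto (fun _ => isometry_smul _ _) hΨ hΦ
    fun n => inv_smul_smul (x n)
  let e : Completion G ≃ₜ Completion G :=
    { toFun := Ψ, invFun := Φ, left_inv := hΦΨ, right_inv := hΨΦ
      continuous_toFun := (Isometry.of_tendsto (fun _ => isometry_smul _ _) hΨ).continuous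
      continuous_invFun := (Isometry.of_tendsto (fun _ => isometry_smul _ _) hΦ).continuous }
  have hG : range ((↑) : G → Completion G) ∈ residual (Completion G) :=
    residual_of_dense_Gδ Completion.coe_isometry.isEmbedding.isInducing.isGδ_range
      Completion.denseRange_coe
  have : Nonempty (Completion G) := ⟨((1 : G) : Completion G)⟩
  -- Baire: some point `c` of `G` is mapped into `G` by `Ψ`, so `Φ` maps `Ψ c ∈ G` to `c ∈ G`.
  obtain ⟨_, ⟨c, rfl⟩, y, hy⟩ :=
    (dense_of_mem_residual (inter_mem hG (tendsto_residual_of_isOpenMap e.continuous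
      e.isOpenMap hG))).nonempty
  replace hy : (y : Completion G) = Ψ c := hy
  have hxy : Tendsto (fun n => x n * y) atTop (𝓝 c) := by
    rw [Completion.coe_isometry.isEmbedding.isInducing.tendsto_nhds_iff]
    simpa [Function.comp_def, ← smul_eq_mul, Completion.coe_smul, hy, hΦΨ c] using hΦ (Ψ c)
  exact ⟨c * y⁻¹, by simpa using hxy.mul_const y⁻¹⟩

section TranslateSupDist

variable {G : Type*} [Group G] [PseudoMetricSpace G]

noncomputable def translateSupDist (a b : G) : ℝ := ⨆ g : G, min (dist (g * a) (g * b)) 1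

theorem bddAbove_range_min_dist_mul (a b : G) :
    BddAbove (range fun g : G => min (dist (g * a) (g * b)) 1) :=
  ⟨1, by rintro _ ⟨g, rfl⟩; exact min_le_right _ _⟩

theorem min_dist_le_translateSupDist (a b : G) : min (dist a b) 1 ≤ translateSupDist a b := by
  unfold translateSupDist
  simpa only [one_mul] using le_ciSup (bddAbove_range_min_dist_mul a b) 1

theorem translateSupDist_le {a b : G} {ε : ℝ} (h : ∀ g : G, dist (g * a) (g * b) ≤ ε) :
    translateSupDist a b ≤ ε :=
  ciSup_le fun g => (min_le_left _ _).trans (h g)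

theorem translateSupDist_mul_left (g a b : G) :
    translateSupDist (g * a) (g * b) = translateSupDist a b := by
  simp only [translateSupDist, ← mul_assoc]
  exact (mul_right_surjective g).iSup_comp fun h => min (dist (h * a) (h * b)) 1

theorem translateSupDist_triangle (a b c : G) :
    translateSupDist a c ≤ translateSupDist a b + translateSupDist b c := by
  refine ciSup_le fun g => ?_
  have hmin : min (dist (g * a) (g * c)) 1 ≤
      min (dist (g * a) (g * b)) 1 + min (dist (g * b) (g * c)) 1 := by
    have := dist_triangle (g * a) (g * b) (g * c)
    have := dist_nonneg (x := g * a) (y := g * b)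
    have := dist_nonneg (x := g * b) (y := g * c)
    simp only [min_def]
    split_ifs <;> linarith
  exact hmin.trans (add_le_add (le_ciSup (bddAbove_range_min_dist_mul a b) g)
    (le_ciSup (bddAbove_range_min_dist_mul b c) g))

theorem hasBasis_uniformity_translateSupDist (h : UniformEquicontinuous fun g : G => (g * ·)) :
    (𝓤 G).HasBasis (fun ε : ℝ => 0 < ε) fun ε => {p | translateSupDist p.1 p.2 < ε} := by
  refine uniformity_basis_dist.to_hasBasis
    (fun ε hε => ⟨min ε 1, lt_min hε one_pos, fun p hp => ?_⟩) fun ε hε => ?_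
  · by_contra hle
    exact (min_le_min_right 1 (not_lt.1 hle)).not_gt
      ((min_dist_le_translateSupDist p.1 p.2).trans_lt hp)
  · obtain ⟨δ, hδ, hδε⟩ := Metric.uniformEquicontinuous_iff.1 h (ε / 2) (half_pos hε)
    exact ⟨δ, hδ, fun p hp => (translateSupDist_le fun g => (hδε _ _ hp g).le).trans_lt
      (half_lt_self hε)⟩

variable (G) in
@[reducible] noncomputable def translateSupPseudoMetricSpace
    (h : UniformEquicontinuous fun g : G => (g * ·)) : PseudoMetricSpace G where
  dist := translateSupDist
  dist_self a := le_antisymm (translateSupDist_le fun _ => (dist_self _).le)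
    ((le_min dist_nonneg zero_le_one).trans (min_dist_le_translateSupDist a a))
  dist_comm a b := by simp only [translateSupDist, dist_comm]
  dist_triangle := translateSupDist_triangle
  toUniformSpace := PseudoMetricSpace.toUniformSpace
  uniformity_dist := (hasBasis_uniformity_translateSupDist h).eq_biInf

end TranslateSupDist

theorem exists_metricSpace_dist_mul_left (G : Type*) [Group G] [t : TopologicalSpace G]
    [IsTopologicalGroup G] [FirstCountableTopology G] [T0Space G] :
    ∃ m : MetricSpace G, m.toUniformSpace.toTopologicalSpace = t ∧
      ∀ g a b : G, m.dist (g * a) (g * b) = m.dist a b := by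
  let _ := IsTopologicalGroup.leftUniformSpace G
  have : (𝓤 G).IsCountablyGenerated := comap.isCountablyGenerated _ _
  obtain ⟨ρ, hρ⟩ := UniformSpace.metrizable_uniformity G
  let _ : PseudoMetricSpace G := ρ.replaceUniformity (congrArg (@uniformity G) hρ).symm
  have hequi : UniformEquicontinuous fun g : G => (g * ·) := by
    rintro V ⟨S, hS, hSV⟩
    filter_upwards [preimage_mem_comap hS] with p hp g
    exact hSV (by simpa [mul_assoc] using hp)
  have hinv := translateSupDist_mul_left (G := G)
  let _ := translateSupPseudoMetricSpace G hequi
  exact ⟨.ofT0PseudoMetricSpace G, rfl, hinv⟩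

theorem IsBalanced.isCLI {G : Type*} [Group G] [t : TopologicalSpace G] [IsTopologicalGroup G]
    [PolishSpace G] {α : Ordinal} (h : IsBalanced G α) : IsCLI G := by
  obtain ⟨m, rfl, hinv⟩ := exists_metricSpace_dist_mul_left G
  let _ := m
  have : IsIsometricSMul G G := ⟨fun g => Isometry.of_dist_eq (hinv g)⟩
  refine ⟨m, rfl, Metric.complete_of_cauchySeq_tendsto fun x hx => ?_, hinv⟩
  refine exists_tendsto_of_cauchySeq_of_cauchySeq_inv hx ?_
  rw [cauchySeq_iff_tendsto_inv_mul] at hx ⊢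
  simpa using h.tendsto_mul_inv hx

/-- For a Polish group `G`: `G` is CLI iff `rk(G) < ∞` iff `rk(G) < ω₁`. -/
theorem isCLI_iff_rk_lt_infty_iff_rk_lt_omega1 {G : Type u} [Group G] [TopologicalSpace G]
    [IsTopologicalGroup G] [PolishSpace G] :
    (IsCLI G ↔ ∃ α : Ordinal.{v}, IsBalanced G α) ∧
    (IsCLI G ↔ ∃ α : Ordinal.{v}, α.card ≤ Cardinal.aleph0 ∧ IsBalanced G α) := by
  have hA : IsCLI G → ∃ α : Ordinal.{v}, α.card ≤ Cardinal.aleph0 ∧ IsBalanced G α :=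
    IsCLI.exists_card_le_aleph0_isBalanced
  have hB : ∀ α : Ordinal.{v}, IsBalanced G α → IsCLI G := fun _ h => h.isCLI
  exact ⟨⟨fun h => (hA h).imp fun _ => And.right, fun ⟨α, h⟩ => hB α h⟩,
    ⟨hA, fun ⟨α, _, h⟩ => hB α h⟩⟩
end

section
/- If L is a countable scattered linear order, then Aut(L), with the topology of pointwise convergence, is a CLI Polish group. -/
universe u v w x

/-- A (strict order) relation is scattered: it has no suborder isomorphic to `ℚ`. -/
def IsScatteredRel {X : Type u} (r : X → X → Prop) : Prop :=
  ¬∃ f : ℚ → X, ∀ q q' : ℚ, q < q' ↔ r (f q) (f q')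

/-- The topology of pointwise convergence on the group of permutations of a
(discrete) set `N`. -/
def permTop (N : Type u) : TopologicalSpace (Equiv.Perm N) :=
  TopologicalSpace.induced (fun f => (f : N → N))
    (@Pi.topologicalSpace N (fun _ => N) (fun _ => ⊥))

/-- The automorphism group of a linear order `L`, as a subgroup of `Sym(L)`. -/
def orderAut (L : Type u) [LinearOrder L] : Subgroup (Equiv.Perm L) where
  carrier := {f : Equiv.Perm L | ∀ a b : L, a ≤ b ↔ f a ≤ f b}
  one_mem' := by intro a b; rfl
  mul_mem' := by
    intro f g hf hg a b
    rw [hg a b, hf (g a) (g b)]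
    rfl
  inv_mem' := by
    intro f hf a b
    have h := hf (f⁻¹ a) (f⁻¹ b)
    rw [Equiv.Perm.coe_inv, Equiv.apply_symm_apply, Equiv.apply_symm_apply] at h
    exact h.symm

/-!
Order automorphisms are isometries of the `{0, 1}`-valued metric on `L`, so the metric
`∑ₙ 2⁻ⁿ [f xₙ ≠ g xₙ]` on `L → L` restricts to a left-invariant metric on `Aut(L)` inducing the
topology of pointwise convergence. It is complete because `Aut(L)` is closed in `L → L`: a pointwise
limit `f` of automorphisms is an order embedding, and it is onto. Indeed, if `b ∉ range f`, take by
Zorn a maximal convex, automorphism-invariant equivalence relation `E` never relating `f x` to `b`.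
Its finite condensation (`u ~ v` iff finitely many `E`-classes meet `[u, v]`) has the same
properties: comparing the number of classes meeting `[x, g₀⁻¹ b]` and `[x, g₁⁻¹ b]` for two
automorphisms `g₀, g₁` agreeing with `f` at `x` (and `g₁` also at `g₀⁻¹ b`) shows that
`f (g₀⁻¹ b)` and `b` would be related. By maximality infinitely many classes lie between any two,
so a set of representatives is a countable dense order with two points, hence contains `ℚ`.
-/

open Set Function Topology

theorem OrderIso.image_uIcc {α β : Type*} [Lattice α] [Lattice β] (e : α ≃o β) (a b : α) :
    e '' uIcc a b = uIcc (e a) (e b) := by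
  rw [uIcc, e.image_Icc, e.map_inf, e.map_sup, uIcc]

theorem mem_uIcc_or_mem_uIcc_of_lt_iff_lt {α : Type*} [LinearOrder α] {x a a' : α}
    (h : x < a ↔ x < a') : a ∈ uIcc x a' ∨ a' ∈ uIcc x a := by
  simp only [mem_uIcc]
  grind

section ConvexEquivalence

variable {L : Type*} [LinearOrder L]

structure IsConvexEquivalence (E : L → L → Prop) : Prop extends Equivalence E where
  convex : ∀ {u v w}, E u v → w ∈ uIcc u v → E u w

namespace IsConvexEquivalence

variable {E : L → L → Prop} (hE : IsConvexEquivalence E)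
include hE

theorem lt_of_not_rel {u v u' v' : L} (huv : ¬ E u v) (hlt : u < v) (hu : E u u')
    (hv : E v v') : u' < v' := by
  by_contra! hle
  rcases le_or_gt v' u with h | h
  · have hv'u : E v' u := hE.convex (hE.symm hv) (mem_uIcc_of_le h hlt.le)
    exact huv (hE.trans (hE.symm hv'u) (hE.symm hv))
  · have huv' : E u v' := hE.convex hu (mem_uIcc_of_le h.le hle)
    exact huv (hE.trans huv' (hE.symm hv))

theorem image_mk_uIcc_ssubset {x a a' : L} (ha : a ∈ uIcc x a') (haa' : ¬ E a a') :
    Quot.mk E '' uIcc x a ⊂ Quot.mk E '' uIcc x a' := by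
  refine ssubset_iff_subset_ne.2 ⟨image_mono (uIcc_subset_uIcc left_mem_uIcc ha), fun heq => ?_⟩
  obtain ⟨z, hz, hza'⟩ : Quot.mk E a' ∈ Quot.mk E '' uIcc x a :=
    heq ▸ mem_image_of_mem _ right_mem_uIcc
  replace hza' : E z a' := (hE.quot_mk_eq_iff _ _).1 hza'
  have haz : a ∈ uIcc z a' := by
    simp only [mem_uIcc] at ha hz ⊢
    grind
  exact haa' (hE.trans (hE.symm (hE.convex hza' haz)) hza')

end IsConvexEquivalence

def finiteCondensation (E : L → L → Prop) (u v : L) : Prop :=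
  (Quot.mk E '' uIcc u v).Finite

theorem isConvexEquivalence_finiteCondensation (E : L → L → Prop) :
    IsConvexEquivalence (finiteCondensation E) where
  refl u := by simp [finiteCondensation]
  symm h := by rwa [finiteCondensation, uIcc_comm]
  trans h₁ h₂ := (h₁.union h₂).subset (image_union .. ▸ image_mono uIcc_subset_uIcc_union_uIcc)
  convex h hw := h.subset (image_mono (uIcc_subset_uIcc left_mem_uIcc hw))

theorem IsConvexEquivalence.le_finiteCondensation {E : L → L → Prop} (hE : IsConvexEquivalence E) :
    E ≤ finiteCondensation E := fun u v huv =>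
  (finite_singleton (Quot.mk E u)).subset <| by
    rintro _ ⟨w, hw, rfl⟩
    exact Quot.sound (hE.symm (hE.convex huv hw))

theorem finiteCondensation_map {E : L → L → Prop} (e : L ≃o L)
    (he : ∀ {u v}, E u v → E (e u) (e v)) {u v : L} (h : finiteCondensation E u v) :
    finiteCondensation E (e u) (e v) := by
  rw [finiteCondensation, ← e.image_uIcc, image_image]
  have := h.image (Quot.map e fun _ _ => he)
  rwa [image_image] at this

structure IsAdmissible (f : L → L) (b : L) (E : L → L → Prop) : Prop
    extends IsConvexEquivalence E where
  map_orderIso (e : L ≃o L) {u v : L} : E u v → E (e u) (e v)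
  not_rel_apply (x : L) : ¬ E (f x) b

namespace IsAdmissible

variable {f : L → L} {b : L} {E : L → L → Prop} (hE : IsAdmissible f b E)
include hE

theorem rel_iff_rel_apply (e : L ≃o L) (u v : L) : E u v ↔ E (e u) (e v) :=
  ⟨hE.map_orderIso e, fun h => by simpa using hE.map_orderIso e.symm h⟩

theorem image_mk_image (e : L ≃o L) (J : Set L) :
    Quot.mk E '' (e '' J) = Quot.congr e.toEquiv (hE.rel_iff_rel_apply e) '' (Quot.mk E '' J) := by
  rw [image_image, image_image]
  rfl

theorem not_finiteCondensation_apply (hf : ∀ S : Finset L, ∃ e : L ≃o L, ∀ x ∈ S, e x = f x)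
    (x : L) : ¬ finiteCondensation E (f x) b := by
  intro (hfin : (Quot.mk E '' uIcc (f x) b).Finite)
  have hcount : ∀ (e : L ≃o L) (a : L), e x = f x → e a = b →
      (Quot.mk E '' uIcc x a).Finite ∧
        (Quot.mk E '' uIcc x a).ncard = (Quot.mk E '' uIcc (f x) b).ncard := by
    intro e a hex hea
    have himage := hE.image_mk_image e (uIcc x a)
    rw [e.image_uIcc, hex, hea] at himage
    rw [himage, ncard_image_of_injective _ (Equiv.injective _)]
    exact ⟨(himage ▸ hfin).of_finite_image (Equiv.injective _).injOn, rfl⟩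
  have hrel : ∀ a a', a ∈ uIcc x a' → (Quot.mk E '' uIcc x a').Finite →
      (Quot.mk E '' uIcc x a).ncard = (Quot.mk E '' uIcc x a').ncard → E a a' := by
    intro a a' ha hfin' hcard
    by_contra h
    exact (ncard_lt_ncard (hE.image_mk_uIcc_ssubset ha h) hfin').ne hcard
  obtain ⟨e₀, he₀⟩ := hf {x}
  obtain ⟨e₁, he₁⟩ := hf {x, e₀.symm b}
  have h₀ := hcount e₀ (e₀.symm b) (he₀ x (by simp)) (by simp)
  have h₁ := hcount e₁ (e₁.symm b) (he₁ x (by simp)) (by simp)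
  have hside : x < e₀.symm b ↔ x < e₁.symm b := by
    have h₀ := e₀.lt_iff_lt (x := x) (y := e₀.symm b)
    have h₁ := e₁.lt_iff_lt (x := x) (y := e₁.symm b)
    rw [he₀ x (by simp), OrderIso.apply_symm_apply] at h₀
    rw [he₁ x (by simp), OrderIso.apply_symm_apply] at h₁
    exact h₀.symm.trans h₁
  have h₀₁ : E (e₀.symm b) (e₁.symm b) := by
    rcases mem_uIcc_or_mem_uIcc_of_lt_iff_lt hside with h | h
    · exact hrel _ _ h h₁.1 (h₀.2.trans h₁.2.symm)
    · exact hE.symm (hrel _ _ h h₀.1 (h₁.2.trans h₀.2.symm))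
  have := hE.map_orderIso e₁ h₀₁
  rw [he₁ _ (by simp), OrderIso.apply_symm_apply] at this
  exact hE.not_rel_apply _ this

theorem finiteCondensation (hf : ∀ S : Finset L, ∃ e : L ≃o L, ∀ x ∈ S, e x = f x) :
    IsAdmissible f b (finiteCondensation E) where
  toIsConvexEquivalence := isConvexEquivalence_finiteCondensation E
  map_orderIso e _ _ := finiteCondensation_map (E := E) e (hE.map_orderIso e)
  not_rel_apply := hE.not_finiteCondensation_apply hf

end IsAdmissible

theorem isAdmissible_eq {f : L → L} {b : L} (hb : ∀ x, f x ≠ b) : IsAdmissible f b (· = ·) where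
  toEquivalence := eq_equivalence
  convex := by
    rintro u _ w rfl hw
    simpa [eq_comm] using hw
  map_orderIso e _ _ := congrArg e
  not_rel_apply := hb

theorem isAdmissible_union_of_isChain {f : L → L} {b : L} {c : Set (L → L → Prop)}
    (hc : ∀ E ∈ c, IsAdmissible f b E) (hchain : IsChain (· ≤ ·) c) (hne : c.Nonempty) :
    IsAdmissible f b fun u v => ∃ E ∈ c, E u v where
  refl u := hne.elim fun E hE => ⟨E, hE, (hc E hE).refl u⟩
  symm := fun ⟨E, hE, h⟩ => ⟨E, hE, (hc E hE).symm h⟩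
  trans := by
    rintro u v w ⟨E₁, hE₁, h₁⟩ ⟨E₂, hE₂, h₂⟩
    rcases hchain.total hE₁ hE₂ with h | h
    · exact ⟨E₂, hE₂, (hc E₂ hE₂).trans (h _ _ h₁) h₂⟩
    · exact ⟨E₁, hE₁, (hc E₁ hE₁).trans h₁ (h _ _ h₂)⟩
  convex := fun ⟨E, hE, h⟩ hw => ⟨E, hE, (hc E hE).convex h hw⟩
  map_orderIso e _ _ := fun ⟨E, hE, h⟩ => ⟨E, hE, (hc E hE).map_orderIso e h⟩
  not_rel_apply x := fun ⟨E, hE, h⟩ => (hc E hE).not_rel_apply x h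

theorem exists_maximal_isAdmissible {f : L → L} {b : L} (hb : ∀ x, f x ≠ b) :
    ∃ E, Maximal (IsAdmissible f b) E := by
  obtain ⟨E, -, hE⟩ := zorn_le_nonempty₀ {E | IsAdmissible f b E}
    (fun c hc hchain E hE => ⟨_, isAdmissible_union_of_isChain hc hchain ⟨E, hE⟩,
      fun E' hE' u v h => ⟨E', hE', h⟩⟩) _ (isAdmissible_eq hb)
  exact ⟨E, hE⟩

theorem IsConvexEquivalence.exists_strictMono_rat [Countable L] {E : L → L → Prop}
    (hE : IsConvexEquivalence E) (hcond : finiteCondensation E ≤ E) {u v : L} (huv : ¬ E u v) :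
    ∃ φ : ℚ → L, StrictMono φ := by
  have hout : ∀ z, E (Quot.mk E z).out z := fun z => (hE.quot_mk_eq_iff _ _).1 (Quot.out_eq _)
  have hne : ∀ {q q' : Quot E}, q.out < q'.out → ¬ E q.out q'.out := fun hlt h => by
    rw [← hE.quot_mk_eq_iff, Quot.out_eq, Quot.out_eq] at h
    exact hlt.ne (congrArg Quot.out h)
  have hmid : ∀ {r r' : L}, ¬ E r r' → ∃ z ∈ uIcc r r', ¬ E r z ∧ ¬ E z r' := by
    intro r r' hrr'
    by_contra! h
    refine hrr' (hcond r r' (((finite_singleton (Quot.mk E r')).insert (Quot.mk E r)).subset ?_))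
    rintro _ ⟨w, hw, rfl⟩
    by_cases hrw : E r w
    · exact .inl (Quot.sound (hE.symm hrw))
    · exact .inr (Quot.sound (h w hw hrw))
  let R := range (Quot.out : Quot E → L)
  have : Nontrivial R := by
    refine ⟨⟨⟨_, Quot.mk E u, rfl⟩, ⟨_, Quot.mk E v, rfl⟩, fun h => huv ?_⟩⟩
    have h' : (Quot.mk E u).out = (Quot.mk E v).out := congrArg Subtype.val h
    exact hE.trans (hE.symm (hout u)) (h' ▸ hout v)
  have : DenselyOrdered R := by
    refine ⟨?_⟩
    rintro ⟨_, q, rfl⟩ ⟨_, q', rfl⟩ (hlt : q.out < q'.out)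
    obtain ⟨z, hz, hqz, hzq'⟩ := hmid (hne hlt)
    rw [uIcc_of_le hlt.le] at hz
    have hqz' : q.out < z := hz.1.lt_of_ne fun h => hqz (h ▸ hE.refl _)
    have hzq'' : z < q'.out := hz.2.lt_of_ne fun h => hzq' (h ▸ hE.refl _)
    exact ⟨⟨_, Quot.mk E z, rfl⟩, hE.lt_of_not_rel hqz hqz' (hE.refl _) (hE.symm (hout z)),
      hE.lt_of_not_rel hzq' hzq'' (hE.symm (hout z)) (hE.refl _)⟩
  obtain ⟨e⟩ := Order.embedding_from_countable_to_dense (α := ℚ) (β := R)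
  exact ⟨fun q => e q, (Subtype.strictMono_coe _).comp e.strictMono⟩

theorem surjective_of_forall_finset_exists_orderIso [Countable L]
    (hL : IsScatteredRel ((· < ·) : L → L → Prop)) {f : L → L}
    (hf : ∀ S : Finset L, ∃ e : L ≃o L, ∀ x ∈ S, e x = f x) : Surjective f := by
  intro b
  by_contra! hb
  obtain ⟨E, hE⟩ := exists_maximal_isAdmissible hb
  have hcond : finiteCondensation E ≤ E :=
    hE.2 (hE.1.finiteCondensation hf) hE.1.le_finiteCondensation
  obtain ⟨φ, hφ⟩ := hE.1.exists_strictMono_rat hcond (hE.1.not_rel_apply b)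
  exact hL ⟨φ, fun q q' => hφ.lt_iff_lt.symm⟩

theorem exists_orderIso_eq_of_forall_finset_exists_orderIso [Countable L]
    (hL : IsScatteredRel ((· < ·) : L → L → Prop)) {f : L → L}
    (hf : ∀ S : Finset L, ∃ e : L ≃o L, ∀ x ∈ S, e x = f x) : ∃ e : L ≃o L, ⇑e = f := by
  have hmono : StrictMono f := fun a a' h => by
    obtain ⟨e, he⟩ := hf {a, a'}
    rw [← he a (by simp), ← he a' (by simp)]
    exact e.strictMono h
  exact ⟨hmono.orderIsoOfSurjective f (surjective_of_forall_finset_exists_orderIso hL hf), rfl⟩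

end ConvexEquivalence

theorem continuous_eval_of_discreteTopology {α β : Type*} [TopologicalSpace α] [DiscreteTopology α]
    [TopologicalSpace β] : Continuous fun p : (α → β) × α => p.1 p.2 := by
  refine continuous_iff_continuousAt.2 fun ⟨f, a⟩ => ?_
  have : (fun p : (α → β) × α => p.1 a) =ᶠ[𝓝 (f, a)] fun p => p.1 p.2 := by
    filter_upwards [continuous_snd.continuousAt.preimage_mem_nhds
      ((isOpen_discrete {a}).mem_nhds rfl)] with p hp
    rw [show p.2 = a from hp]
  exact ((continuous_apply a).comp continuous_fst).continuousAt.congr this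

theorem isInducing_coe_permTop {α : Type*} [TopologicalSpace α] [DiscreteTopology α] :
    @IsInducing (Equiv.Perm α) (α → α) (permTop α) _ (⇑) :=
  @IsInducing.mk _ _ (permTop α) _ _ (by rw [permTop, DiscreteTopology.eq_bot (α := α)])

theorem isTopologicalGroup_permTop (α : Type*) :
    @IsTopologicalGroup (Equiv.Perm α) (permTop α) _ := by
  let _ : TopologicalSpace α := ⊥
  have : DiscreteTopology α := ⟨rfl⟩
  let _ := permTop α
  have hρ := isInducing_coe_permTop (α := α)
  refine { continuous_mul := ?_, continuous_inv := ?_ }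
  · refine hρ.continuous_iff.2 (continuous_pi fun x => ?_)
    exact continuous_eval_of_discreteTopology.comp
      ((hρ.continuous.comp continuous_fst).prodMk
        ((continuous_apply x).comp (hρ.continuous.comp continuous_snd)))
  · refine hρ.continuous_iff.2 (continuous_pi fun x => continuous_discrete_rng.2 fun y => ?_)
    have : (fun g : Equiv.Perm α => g⁻¹ x) ⁻¹' {y} = (fun g : Equiv.Perm α => g y) ⁻¹' {x} := by
      ext g
      exact Equiv.Perm.inv_eq_iff_eq.trans eq_comm
    exact this ▸ ((continuous_apply y).comp hρ.continuous).isOpen_preimage _ (isOpen_discrete _)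

theorem isClosed_range_coe_orderIso {L : Type*} [LinearOrder L] [Countable L] [TopologicalSpace L]
    [DiscreteTopology L] (hL : IsScatteredRel ((· < ·) : L → L → Prop)) :
    IsClosed (range ((⇑) : (L ≃o L) → L → L)) := by
  refine closure_subset_iff_isClosed.1 fun f hf =>
    exists_orderIso_eq_of_forall_finset_exists_orderIso hL fun S => ?_
  obtain ⟨_, hU, e, rfl⟩ := mem_closure_iff.1 hf ((S : Set L).pi fun x => {f x})
    (isOpen_set_pi S.finite_toSet fun _ _ => isOpen_discrete _) (by simp)
  exact ⟨e, hU⟩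

theorem range_coe_orderAut (L : Type*) [LinearOrder L] :
    range (fun g : orderAut L => ⇑(g : Equiv.Perm L)) = range ((⇑) : (L ≃o L) → L → L) := by
  ext f
  constructor
  · rintro ⟨g, rfl⟩
    exact ⟨⟨g.1, fun {a b} => (g.2 a b).symm⟩, rfl⟩
  · rintro ⟨e, rfl⟩
    exact ⟨⟨e.toEquiv, fun a b => e.le_iff_le.symm⟩, rfl⟩

open Classical in
/-- The uniformity is `⊥`, so that the topology is definitionally the discrete one of `permTop`. -/
noncomputable abbrev discreteMetricSpace (α : Type*) : MetricSpace α where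
  dist a b := if a = b then 0 else 1
  dist_self a := if_pos rfl
  dist_comm a b := by simp only [eq_comm]
  dist_triangle a b c := by split_ifs <;> simp_all
  eq_of_dist_eq_zero h := by simpa using h
  toUniformSpace := ⊥
  uniformity_dist := by
    refine le_antisymm (le_iInf₂ fun ε hε => Filter.principal_mono.2 fun p (hp : p.1 = p.2) => ?_)
      (iInf₂_le_of_le 1 one_pos (Filter.principal_mono.2
        fun p (hp : (if p.1 = p.2 then 0 else 1) < (1 : ℝ)) => ?_))
    · simpa [hp] using hε
    · show p.1 = p.2
      split_ifs at hp with h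
      exacts [h, (lt_irrefl _ hp).elim]

open Classical in
theorem isometry_of_injective_discreteMetricSpace {α : Type*} {k : α → α} (hk : Injective k) :
    letI := discreteMetricSpace α
    Isometry k :=
  let _ := discreteMetricSpace α
  Isometry.of_dist_eq fun _ _ => if_congr hk.eq_iff rfl rfl

theorem PiCountable.isometry_comp_left {ι β γ : Type*} [Encodable ι] [MetricSpace β]
    [MetricSpace γ] {k : β → γ} (hk : Isometry k) :
    letI : MetricSpace (ι → β) := PiCountable.metricSpace
    letI : MetricSpace (ι → γ) := PiCountable.metricSpace
    Isometry fun f : ι → β => k ∘ f :=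
  let _ : MetricSpace (ι → β) := PiCountable.metricSpace
  let _ : MetricSpace (ι → γ) := PiCountable.metricSpace
  Isometry.of_dist_eq fun f g => tsum_congr fun i => by rw [comp_apply, comp_apply, hk.dist_eq]

/-- If `L` is a countable scattered linear order then its automorphism group, with the
topology of pointwise convergence, is a CLI Polish group. -/
theorem scattered_orderAut_is_CLI_polish (L : Type u) [LinearOrder L] [Countable L]
    (hscat : IsScatteredRel ((· < ·) : L → L → Prop)) :
    letI : TopologicalSpace (Equiv.Perm L) := permTop L
    IsTopologicalGroup ↥(orderAut L) ∧ PolishSpace ↥(orderAut L) ∧ IsCLI ↥(orderAut L) := by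
  let _ : TopologicalSpace (Equiv.Perm L) := permTop L
  have _ := isTopologicalGroup_permTop L
  let _ := Encodable.ofCountable L
  let _ := discreteMetricSpace L
  have _ : DiscreteTopology L := ⟨rfl⟩
  let _ : MetricSpace (L → L) := PiCountable.metricSpace
  have hemb : IsEmbedding fun g : orderAut L => ⇑(g : Equiv.Perm L) :=
    ⟨isInducing_coe_permTop.comp IsInducing.subtypeVal,
      DFunLike.coe_injective.comp Subtype.val_injective⟩
  let m := hemb.comapMetricSpace _
  have hcomplete : CompleteSpace (orderAut L) :=
    (completeSpace_iff_isComplete_range hemb.to_isometry.isUniformInducing).2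
      (range_coe_orderAut L ▸ isClosed_range_coe_orderIso hscat).isComplete
  have _ := hemb.isInducing.secondCountableTopology
  have _ : TopologicalSpace.IsCompletelyMetrizableSpace (orderAut L) := ⟨m, rfl, hcomplete⟩
  refine ⟨inferInstance, inferInstance, m, rfl, hcomplete, fun g h h' => ?_⟩
  exact (PiCountable.isometry_comp_left (isometry_of_injective_discreteMetricSpace
    g.1.injective)).dist_eq ⇑(h : Equiv.Perm L) ⇑(h' : Equiv.Perm L)
end

section
/- For every linear order L: L is a well-order if and only if ℤ[L] is scattered. -/
universe u v w x

/-- The backwards-lexicographic strict order on `ℤ[L]`, the finitely supported functions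
`L → ℤ`: `a ≺* b` iff `a ℓ < b ℓ` at the `L`-greatest `ℓ` where `a` and `b` differ. -/
def zlex {L : Type u} [LinearOrder L] (a b : L →₀ ℤ) : Prop :=
  ∃ ℓ : L, a ℓ < b ℓ ∧ ∀ ℓ' : L, ℓ < ℓ' → a ℓ' = b ℓ'

/-!
If `L` is well-ordered and `f : ℚ → ℤ[L]` were an embedding, pick `a < b` for which the top
index `w` where `f a` and `f b` differ is minimal. For `q ∈ (a, b)` the integers `f q w` lie
between `f a w` and `f b w`, so two of the infinitely many `q` share the value at `w`, and the
top index where those two differ lies strictly below `w`, contradicting minimality.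

Conversely, a strictly decreasing sequence `ℕ → L` turns `Lex (ℕ →₀ ℤ)`, a countable dense
linear order without endpoints and hence a copy of `ℚ`, into a suborder of `ℤ[L]`.
-/

open Finsupp

section Witness

variable {L : Type*} [LinearOrder L] {ℓ ℓ₁ ℓ₂ ℓ' w : L} {a b c : L →₀ ℤ}

/-- `zlex a b` unfolds to `∃ ℓ, ZlexAt ℓ a b`; the witness is unique by `ZlexAt.unique`. -/
def ZlexAt (ℓ : L) (a b : L →₀ ℤ) : Prop :=
  a ℓ < b ℓ ∧ ∀ ℓ' : L, ℓ < ℓ' → a ℓ' = b ℓ'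

theorem ZlexAt.trans (h₁ : ZlexAt ℓ₁ a b) (h₂ : ZlexAt ℓ₂ b c) : ZlexAt (max ℓ₁ ℓ₂) a c := by
  refine ⟨?_, fun ℓ' hℓ' => (h₁.2 ℓ' (max_lt_iff.mp hℓ').1).trans (h₂.2 ℓ' (max_lt_iff.mp hℓ').2)⟩
  rcases lt_trichotomy ℓ₁ ℓ₂ with h | rfl | h
  · rw [max_eq_right h.le, h₁.2 _ h]
    exact h₂.1
  · rw [max_self]
    exact h₁.1.trans h₂.1
  · rw [max_eq_left h.le, ← h₂.2 _ h]
    exact h₁.1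

theorem ZlexAt.unique (h : ZlexAt ℓ a b) (h' : ZlexAt ℓ' a b) : ℓ = ℓ' := by
  by_contra hne
  rcases lt_or_gt_of_ne hne with hlt | hlt
  · exact h'.1.ne (h.2 _ hlt)
  · exact h.1.ne (h'.2 _ hlt)

theorem ZlexAt.le_of_trans (h₁ : ZlexAt ℓ₁ a b) (h₂ : ZlexAt ℓ₂ b c) (h : ZlexAt ℓ a c) :
    ℓ₁ ≤ ℓ ∧ ℓ₂ ≤ ℓ :=
  max_le_iff.mp ((h₁.trans h₂).unique h).le

theorem ZlexAt.apply_le (h : ZlexAt ℓ a b) (hw : ℓ ≤ w) : a w ≤ b w := by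
  rcases hw.lt_or_eq with hlt | rfl
  · exact (h.2 _ hlt).le
  · exact h.1.le

theorem exists_zlexAt_lt {f : ℚ → L →₀ ℤ} (hf : ∀ q q', q < q' → zlex (f q) (f q'))
    {a b : ℚ} (hab : a < b) (hw : ZlexAt w (f a) (f b)) :
    ∃ q q' ℓ, q < q' ∧ ZlexAt ℓ (f q) (f q') ∧ ℓ < w := by
  have hmaps : Set.MapsTo (fun q => f q w) (Set.Ioo a b) (Set.Icc (f a w) (f b w)) := by
    rintro q ⟨haq, hqb⟩
    obtain ⟨ℓ₁, h₁⟩ := hf a q haq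
    obtain ⟨ℓ₂, h₂⟩ := hf q b hqb
    obtain ⟨hℓ₁, hℓ₂⟩ := ZlexAt.le_of_trans h₁ h₂ hw
    exact ⟨ZlexAt.apply_le h₁ hℓ₁, ZlexAt.apply_le h₂ hℓ₂⟩
  obtain ⟨q, ⟨haq, hqb⟩, q', ⟨haq', hq'b⟩, hne, heq⟩ :=
    (Set.Ioo_infinite hab).exists_ne_map_eq_of_mapsTo hmaps (Set.finite_Icc _ _)
  wlog hqq' : q < q' generalizing q q'
  · exact this q' haq' hq'b q haq hqb hne.symm heq.symm (hne.symm.lt_of_le (not_lt.mp hqq'))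
  obtain ⟨ℓ₁, h₁⟩ := hf a q haq
  obtain ⟨ℓ, h⟩ := hf q q' hqq'
  obtain ⟨ℓ₃, h₃⟩ := hf q' b hq'b
  have hle : ℓ ≤ w := (max_le_iff.mp (ZlexAt.le_of_trans (ZlexAt.trans h₁ h) h₃ hw).1).2
  exact ⟨q, q', ℓ, hqq', h, hle.lt_of_ne fun hℓ => h.1.ne (hℓ ▸ heq)⟩

theorem not_forall_zlex_of_wellFoundedLT [WellFoundedLT L] (f : ℚ → L →₀ ℤ) :
    ¬ ∀ q q', q < q' → zlex (f q) (f q') := by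
  intro hf
  obtain ⟨ℓ₀, h₀⟩ := hf 0 1 one_pos
  obtain ⟨w, ⟨a, b, hab, hw⟩, hmin⟩ := wellFounded_lt.has_min
    {ℓ : L | ∃ a b, a < b ∧ ZlexAt ℓ (f a) (f b)} ⟨ℓ₀, 0, 1, one_pos, h₀⟩
  obtain ⟨q, q', ℓ, hqq', hℓ, hlt⟩ := exists_zlexAt_lt hf hab hw
  exact hmin ℓ ⟨q, q', hqq', hℓ⟩ hlt

end Witness

section Embedding

instance {α : Type*} [Countable α] : Countable (Lex α) :=
  Countable.of_equiv α toLex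

instance {α : Type*} [LinearOrder α] [NoMaxOrder α] : DenselyOrdered (Lex (α →₀ ℤ)) where
  dense x y hxy := by
    obtain ⟨n, hagree, hn⟩ := Lex.lt_iff.mp hxy
    obtain ⟨m, hnm⟩ := exists_gt n
    refine ⟨toLex (ofLex x + single m 1), Lex.lt_iff.mpr ⟨m, fun j hj => ?_, by simp⟩,
      Lex.lt_iff.mpr ⟨n, fun j hj => ?_, ?_⟩⟩
    · simp [hj.ne']
    · simp [(hj.trans hnm).ne', hagree j hj]
    · simpa [single_apply, hnm.ne'] using hn

theorem zlex_iff_toColex_lt {L : Type*} [LinearOrder L] {a b : L →₀ ℤ} :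
    zlex a b ↔ toColex a < toColex b := by
  rw [Colex.lt_iff]
  exact exists_congr fun _ => and_comm

theorem StrictAnti.strictMono_toColex_embDomain {α β N : Type*} [LinearOrder α] [LinearOrder β]
    [Zero N] [PartialOrder N] {e : α ↪ β} (he : StrictAnti e) :
    StrictMono fun x : Lex (α →₀ N) => toColex ((ofLex x).embDomain e) := by
  intro x y hxy
  obtain ⟨i, hagree, hi⟩ := Lex.lt_iff.mp hxy
  refine Colex.lt_iff.mpr ⟨e i, fun j hj => ?_, by simpa using hi⟩
  by_cases hj' : j ∈ Set.range e
  · obtain ⟨k, rfl⟩ := hj'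
    simpa using hagree k (he.lt_iff_gt.mp hj)
  · simp [embDomain_of_notMem_range _ _ _ hj']

theorem exists_zlex_chain_of_strictAnti {L : Type*} [LinearOrder L] {e : ℕ → L}
    (he : StrictAnti e) : ∃ f : ℚ → L →₀ ℤ, ∀ q q', q < q' ↔ zlex (f q) (f q') := by
  obtain ⟨iso⟩ := Order.iso_of_countable_dense ℚ (Lex (ℕ →₀ ℤ))
  have hmono := StrictAnti.strictMono_toColex_embDomain (N := ℤ) (e := ⟨e, he.injective⟩) he
  refine ⟨fun q => (ofLex (iso q)).embDomain ⟨e, he.injective⟩, fun q q' => ?_⟩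
  rw [zlex_iff_toColex_lt, ← iso.lt_iff_lt]
  exact hmono.lt_iff_lt.symm

end Embedding

/-- A linear order `L` is a well-order if and only if `ℤ[L]` is scattered. -/
theorem wellOrder_iff_zlex_scattered (L : Type u) [LinearOrder L] :
    WellFoundedLT L ↔ IsScatteredRel (zlex (L := L)) := by
  constructor
  · rintro _ ⟨f, hf⟩
    exact not_forall_zlex_of_wellFoundedLT f fun q q' => (hf q q').1
  · intro hsc
    refine ⟨RelEmbedding.wellFounded_iff_isEmpty.mpr ⟨fun e => hsc ?_⟩⟩
    exact exists_zlex_chain_of_strictAnti fun m n hmn => e.map_rel_iff.mpr hmn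
end

section
/- Let L be a countable linear order. The following are equivalent: (1) L is a well-order; (2) ℤ[L] is scattered; (3) Aut(ℤ[L]), with the topology of pointwise convergence, is CLI. -/
/-!
Write `AgreeAbove μ a b` when the greatest point where `a` and `b` differ is `≤ μ`; for fixed `a`
these balls are convex.

If `L` is well-founded, take the least level `μ` at which two points of a copy of `ℚ` in `ℤ[L]`
differ: on a whole interval of `ℚ` the `μ`-th coordinate is then strictly increasing and bounded,
which is impossible. By well-founded induction on `μ` the same argument shows that automorphisms
preserve `AgreeAbove μ`, and then that an automorphism sends `y + single μ 1` to
`g y + single μ 1` modulo lower levels. This survives pointwise limits and forces every pointwise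
limit of automorphisms to be surjective, so `∑ₓ 2^(-encode x) [g x ≠ h x]` is a complete
left-invariant metric on `Aut(ℤ[L])`.

If `L` is not well-founded, it has a nonempty upper set `M` without a least element. Then `ℤ[M]`
is a countable dense order without endpoints, i.e. `ℚ`, and it is the dominant factor of
`ℤ[L] ≅ ℤ[M] ×ₗ ℤ[L \ M]`; so `ℤ[L]` is not scattered. Automorphisms of `ℚ` converging pointwise
to a non-surjective map induce automorphisms of `ℤ[L]` doing the same; under a complete
left-invariant compatible metric they would form a Cauchy sequence without a limit.
-/

universe u v w x

/-- The automorphism group of the linear order `(ℤ[L], ≺*)`, as a subgroup of the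
group of permutations of `ℤ[L]`. -/
def zAut (L : Type u) [LinearOrder L] : Subgroup (Equiv.Perm (L →₀ ℤ)) where
  carrier := {f : Equiv.Perm (L →₀ ℤ) | ∀ a b : L →₀ ℤ, zlex a b ↔ zlex (f a) (f b)}
  one_mem' := by intro a b; rfl
  mul_mem' := by
    intro f g hf hg a b
    rw [hg a b, hf (g a) (g b)]
    rfl
  inv_mem' := by
    intro f hf a b
    have h := hf (f⁻¹ a) (f⁻¹ b)
    rw [show f (f⁻¹ a) = a from Equiv.apply_symm_apply f a,
      show f (f⁻¹ b) = b from Equiv.apply_symm_apply f b] at h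
    exact h.symm

section PermTopology

open Filter Topology

variable {N : Type u}

def PointwiseLimitClosed (G : Subgroup (Equiv.Perm N)) : Prop :=
  ∀ (u : ℕ → G) (f : N → N), (∀ x, ∀ᶠ n in atTop, (u n : Equiv.Perm N) x = f x) →
    ∃ g : G, ⇑(g : Equiv.Perm N) = f

theorem tendsto_permTop_iff {G : Subgroup (Equiv.Perm N)} {ι : Type*} {l : Filter ι}
    {u : ι → G} {g : G} :
    letI := permTop N
    Tendsto u l (𝓝 g) ↔ ∀ x, ∀ᶠ i in l, (u i : Equiv.Perm N) x = (g : Equiv.Perm N) x := by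
  let _ : TopologicalSpace N := ⊥
  have _ : DiscreteTopology N := ⟨rfl⟩
  show Tendsto u l (@nhds G (TopologicalSpace.induced Subtype.val (TopologicalSpace.induced
    (fun f : Equiv.Perm N => ⇑f) Pi.topologicalSpace)) g) ↔ _
  rw [induced_compose, nhds_induced, tendsto_comap_iff, tendsto_pi_nhds]
  simp [nhds_discrete]

theorem PointwiseLimitClosed.of_isCLI {G : Subgroup (Equiv.Perm N)}
    (hG : letI := permTop N; IsCLI G) : PointwiseLimitClosed G := by
  obtain ⟨m, htop, hcomplete, hinv⟩ := hG
  let _ := m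
  have htendsto : ∀ {ι : Type} {l : Filter ι} {v : ι → G} {g : G}, Tendsto v l (𝓝 g) ↔
      ∀ x, ∀ᶠ i in l, (v i : Equiv.Perm N) x = (g : Equiv.Perm N) x := by
    intro ι l v g
    rw [htop]
    exact tendsto_permTop_iff
  intro u f hu
  have hcauchy : CauchySeq u := by
    have hsmall : Tendsto (fun p : ℕ × ℕ => (u p.1)⁻¹ * u p.2) atTop (𝓝 1) := by
      refine htendsto.2 fun x => ?_
      rw [← prod_atTop_atTop_eq]
      filter_upwards [tendsto_fst.eventually (hu x), tendsto_snd.eventually (hu x)]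
        with p h₁ h₂
      simp [h₂, ← h₁]
    refine Metric.cauchySeq_iff.2 fun ε hε => ?_
    obtain ⟨n₀, hn₀⟩ := eventually_atTop_prod_self.1 (Metric.tendsto_nhds.1 hsmall ε hε)
    refine ⟨n₀, fun p hp q hq => ?_⟩
    rw [← hinv (u p)⁻¹, inv_mul_cancel, dist_comm]
    exact hn₀ p q hp hq
  have := hcomplete
  obtain ⟨g, hg⟩ := cauchySeq_tendsto_of_complete hcauchy
  refine ⟨g, funext fun x => ?_⟩
  obtain ⟨n, h₁, h₂⟩ := ((htendsto.1 hg x).and (hu x)).exists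
  exact h₁.symm.trans h₂

theorem PointwiseLimitClosed.isCLI [Countable N] {G : Subgroup (Equiv.Perm N)}
    (hG : PointwiseLimitClosed G) : letI := permTop N; IsCLI G := by
  classical
  obtain ⟨e, he⟩ := exists_injective_nat N
  let _ : Encodable N := Encodable.ofCountable N
  let _ : MetricSpace N := MetricSpace.induced e he inferInstance
  have hsep : Pairwise fun a b : N => 1 ≤ dist a b := fun a b h =>
    Nat.pairwise_one_le_dist (he.ne h)
  have _ : DiscreteTopology N := DiscreteTopology.of_forall_le_dist one_pos hsep
  let _ : MetricSpace (N → N) := PiCountable.metricSpace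
  let m : MetricSpace G := MetricSpace.induced (fun g : G => ⇑(g : Equiv.Perm N))
    (fun g h hgh => Subtype.ext (Equiv.ext (congrFun hgh))) inferInstance
  have htop :
      m.toUniformSpace.toTopologicalSpace = @instTopologicalSpaceSubtype _ _ (permTop N) := by
    show TopologicalSpace.induced _ Pi.topologicalSpace = TopologicalSpace.induced Subtype.val
      (TopologicalSpace.induced (fun f : Equiv.Perm N => ⇑f)
        (@Pi.topologicalSpace N (fun _ => N) fun _ => ⊥))
    rw [induced_compose, ← DiscreteTopology.eq_bot]
    rfl
  -- Distinct points of `N` are at distance `≥ 1`, so each summand is `0` or `2⁻¹ ^ encode x`.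
  have hdist : ∀ g h : G, dist g h = ∑' x, if (g : Equiv.Perm N) x = (h : Equiv.Perm N) x
      then 0 else (2⁻¹ : ℝ) ^ Encodable.encode x := by
    intro g h
    refine (PiCountable.dist_eq_tsum _ _).trans (tsum_congr fun x => ?_)
    split_ifs with hx
    · simp [dist_eq_zero.2 hx]
    · exact min_eq_left ((pow_le_one₀ (by norm_num) (by norm_num)).trans (hsep hx))
  refine ⟨m, htop, Metric.complete_of_cauchySeq_tendsto fun u hu => ?_, fun g h h' => by
    simp [hdist]⟩
  have hstable : ∀ x, ∃ n₀, ∀ n ≥ n₀, (u n : Equiv.Perm N) x = (u n₀ : Equiv.Perm N) x := by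
    intro x
    obtain ⟨n₀, hn₀⟩ := Metric.cauchySeq_iff'.1 hu _ (pow_pos (by norm_num : (0 : ℝ) < 2⁻¹)
      (Encodable.encode x))
    refine ⟨n₀, fun n hn => not_not.1 fun hne => ?_⟩
    have hlt := (hsep hne).trans (PiCountable.dist_le_dist_pi_of_dist_lt (hn₀ n hn))
    exact (hn₀ n hn).not_ge (hlt.trans' (pow_le_one₀ (by norm_num) (by norm_num)))
  choose n₀ hn₀ using hstable
  obtain ⟨g, hg⟩ := hG u _ fun x => eventually_atTop.2 ⟨n₀ x, hn₀ x⟩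
  have htendsto : Tendsto u atTop (𝓝 g) ↔
      ∀ x, ∀ᶠ n in atTop, (u n : Equiv.Perm N) x = (g : Equiv.Perm N) x := by
    rw [htop]
    exact tendsto_permTop_iff
  exact ⟨g, htendsto.2 fun x => eventually_atTop.2 ⟨n₀ x, fun n hn => (hn₀ x n hn).trans
    (congrFun hg x).symm⟩⟩

end PermTopology

section Zlex

variable {L : Type u} [LinearOrder L]

def AgreeAbove (μ : L) (a b : L →₀ ℤ) : Prop := ∀ ℓ, μ < ℓ → a ℓ = b ℓ

def AgreeFrom (μ : L) (a b : L →₀ ℤ) : Prop := ∀ ℓ, μ ≤ ℓ → a ℓ = b ℓ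

namespace AgreeAbove

variable {μ ν : L} {a b c : L →₀ ℤ}

theorem refl (μ : L) (a : L →₀ ℤ) : AgreeAbove μ a a := fun _ _ => rfl

theorem symm (h : AgreeAbove μ a b) : AgreeAbove μ b a := fun ℓ hℓ => (h ℓ hℓ).symm

theorem trans (h : AgreeAbove μ a b) (h' : AgreeAbove μ b c) : AgreeAbove μ a c :=
  fun ℓ hℓ => (h ℓ hℓ).trans (h' ℓ hℓ)

theorem mono (h : AgreeAbove ν a b) (hνμ : ν ≤ μ) : AgreeAbove μ a b :=
  fun ℓ hℓ => h ℓ (hνμ.trans_lt hℓ)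

theorem agreeFrom (h : AgreeAbove μ a b) (hμ : a μ = b μ) : AgreeFrom μ a b :=
  fun ℓ hℓ => hℓ.eq_or_lt.elim (fun h' => h' ▸ hμ) (h ℓ)

end AgreeAbove

theorem agreeAbove_add_single (μ : L) (a : L →₀ ℤ) (k : ℤ) :
    AgreeAbove μ (a + Finsupp.single μ k) a := fun ℓ hℓ => by
  simp [hℓ.ne]

theorem exists_agreeAbove_of_ne {a b : L →₀ ℤ} (h : a ≠ b) :
    ∃ ℓ, a ℓ ≠ b ℓ ∧ AgreeAbove ℓ a b := by
  obtain ⟨ℓ, hℓ, hmax⟩ := (a - b).support.exists_max_image id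
    (Finsupp.support_nonempty_iff.2 (sub_ne_zero.2 h))
  refine ⟨ℓ, by simpa [sub_eq_zero] using hℓ, fun ℓ' hℓ' => ?_⟩
  by_contra hne
  exact (hmax ℓ' (by simpa [sub_eq_zero] using hne)).not_gt hℓ'

theorem exists_lt_agreeAbove_of_agreeFrom {μ : L} {a b : L →₀ ℤ} (h : AgreeFrom μ a b)
    (hne : a ≠ b) : ∃ ν < μ, a ν ≠ b ν ∧ AgreeAbove ν a b := by
  obtain ⟨ν, hν, hagree⟩ := exists_agreeAbove_of_ne hne
  exact ⟨ν, lt_of_not_ge fun hμν => hν (h ν hμν), hν, hagree⟩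

theorem zlex_irrefl (a : L →₀ ℤ) : ¬ zlex a a := fun ⟨_, h, _⟩ => h.false

theorem zlex_trans {a b c : L →₀ ℤ} (hab : zlex a b) (hbc : zlex b c) : zlex a c := by
  obtain ⟨ℓ₁, h₁, hab⟩ := hab
  obtain ⟨ℓ₂, h₂, hbc⟩ := hbc
  rcases lt_trichotomy ℓ₁ ℓ₂ with h | rfl | h
  · exact ⟨ℓ₂, hab ℓ₂ h ▸ h₂, fun ℓ hℓ => (hab ℓ (h.trans hℓ)).trans (hbc ℓ hℓ)⟩
  · exact ⟨ℓ₁, h₁.trans h₂, fun ℓ hℓ => (hab ℓ hℓ).trans (hbc ℓ hℓ)⟩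
  · exact ⟨ℓ₁, (hbc ℓ₁ h).symm ▸ h₁, fun ℓ hℓ => (hab ℓ hℓ).trans (hbc ℓ (h.trans hℓ))⟩

theorem zlex_or_zlex_of_ne {a b : L →₀ ℤ} (h : a ≠ b) : zlex a b ∨ zlex b a := by
  obtain ⟨ℓ, hℓ, hagree⟩ := exists_agreeAbove_of_ne h
  exact hℓ.lt_or_gt.imp (fun h => ⟨ℓ, h, hagree⟩) fun h => ⟨ℓ, h, hagree.symm⟩

instance : IsStrictTotalOrder (L →₀ ℤ) zlex where
  irrefl := zlex_irrefl
  trans _ _ _ := zlex_trans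
  trichotomous a b hab hba := by
    by_contra hne
    exact (zlex_or_zlex_of_ne hne).elim hab hba

theorem zlex_add_single {a : L →₀ ℤ} {k : ℤ} (hk : 0 < k) (μ : L) :
    zlex a (a + Finsupp.single μ k) :=
  ⟨μ, by simpa, (agreeAbove_add_single μ a k).symm⟩

theorem zlex_sub_single {a : L →₀ ℤ} {k : ℤ} (hk : 0 < k) (μ : L) :
    zlex (a - Finsupp.single μ k) a := by
  simpa using zlex_add_single hk μ (a := a - Finsupp.single μ k)

theorem injective_of_zlex_iff {f : (L →₀ ℤ) → (L →₀ ℤ)}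
    (hf : ∀ a b, zlex a b ↔ zlex (f a) (f b)) : Function.Injective f := by
  intro a b hab
  by_contra hne
  rcases zlex_or_zlex_of_ne hne with h | h
  · exact zlex_irrefl (f b) (hab ▸ (hf a b).1 h)
  · exact zlex_irrefl (f b) (hab ▸ (hf b a).1 h)

theorem apply_le_of_zlex {μ : L} {a c : L →₀ ℤ} (hac : zlex a c) (h : AgreeAbove μ a c) :
    a μ ≤ c μ := by
  obtain ⟨w, hw, hagree⟩ := hac
  rcases lt_trichotomy w μ with hlt | rfl | hlt
  · exact (hagree μ hlt).le
  · exact hw.le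
  · exact absurd (h w hlt) hw.ne

theorem AgreeAbove.of_zlex_of_zlex {μ : L} {a b c : L →₀ ℤ} (hac : zlex a c) (hcb : zlex c b)
    (h : AgreeAbove μ a b) : AgreeAbove μ a c := by
  obtain ⟨w, hw, hagree⟩ := hac
  refine AgreeAbove.mono hagree (le_of_not_gt fun hμw =>
    zlex_irrefl c (zlex_trans hcb ⟨w, ?_, ?_⟩))
  · exact h w hμw ▸ hw
  · exact fun ℓ hℓ => ((h ℓ (hμw.trans hℓ)).symm.trans (hagree ℓ hℓ))

theorem apply_mem_Icc_of_zlex_of_zlex {μ : L} {a b c : L →₀ ℤ} (hac : zlex a c)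
    (hcb : zlex c b) (h : AgreeAbove μ a b) : c μ ∈ Set.Icc (a μ) (b μ) := by
  have hc := h.of_zlex_of_zlex hac hcb
  exact ⟨apply_le_of_zlex hac hc, apply_le_of_zlex hcb (hc.symm.trans h)⟩

theorem AgreeFrom.map_of_forall_lt {f : (L →₀ ℤ) → (L →₀ ℤ)} {μ : L}
    (hf : ∀ ν < μ, ∀ a b, AgreeAbove ν a b → AgreeAbove ν (f a) (f b)) {a b : L →₀ ℤ}
    (h : AgreeFrom μ a b) : AgreeFrom μ (f a) (f b) := by
  rcases eq_or_ne a b with rfl | hne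
  · exact fun _ _ => rfl
  obtain ⟨ν, hνμ, -, hagree⟩ := exists_lt_agreeAbove_of_agreeFrom h hne
  exact fun ℓ hℓ => hf ν hνμ a b hagree ℓ (hνμ.trans_le hℓ)

end Zlex

section WellFounded

variable {L : Type u} [LinearOrder L] {g : Equiv.Perm (L →₀ ℤ)}

/-- An automorphism moving `x < y` out of a common `μ`-ball would pull the infinite ladder
`g x + single μ (j + 1)` back to infinitely many distinct `μ`-coordinates in `[x μ, y μ]`. -/
theorem AgreeAbove.map_of_forall_lt (hg : g ∈ zAut L) {μ : L}
    (ih : ∀ ν < μ, ∀ a b, AgreeAbove ν a b → AgreeAbove ν (g a) (g b))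
    {x y : L →₀ ℤ} (hxy : zlex x y) (h : AgreeAbove μ x y) :
    AgreeAbove μ (g x) (g y) := by
  obtain ⟨κ, hκ, hagree⟩ := (hg x y).1 hxy
  refine le_or_gt κ μ |>.elim (AgreeAbove.mono hagree) fun hμκ => ?_
  set p : ℕ → L →₀ ℤ := fun j => g x + Finsupp.single μ (j + 1 : ℤ)
  have hp : ∀ j, zlex (g x) (p j) ∧ zlex (p j) (g y) := fun j =>
    ⟨zlex_add_single (by positivity) μ, κ,
      by simpa [p, Finsupp.single_apply, hμκ.ne] using hκ,
      ((agreeAbove_add_single μ (g x) _).mono hμκ.le).trans hagree⟩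
  have hq : ∀ j, zlex x (g.symm (p j)) ∧ zlex (g.symm (p j)) y := fun j =>
    ⟨(hg _ _).2 (by simpa using (hp j).1), (hg _ _).2 (by simpa using (hp j).2)⟩
  have hinj : Set.InjOn (fun j => g.symm (p j) μ) Set.univ := by
    intro i _ j _ hij
    have hfrom : AgreeFrom μ (g.symm (p i)) (g.symm (p j)) :=
      ((h.of_zlex_of_zlex (hq i).1 (hq i).2).symm.trans
        (h.of_zlex_of_zlex (hq j).1 (hq j).2)).agreeFrom hij
    simpa [p] using AgreeFrom.map_of_forall_lt ih hfrom μ le_rfl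
  exact (Set.infinite_of_injOn_mapsTo hinj
    (fun j _ => apply_mem_Icc_of_zlex_of_zlex (hq j).1 (hq j).2 h) Set.infinite_univ
    (Set.finite_Icc (x μ) (y μ))).elim

variable [WellFoundedLT L]

theorem isScatteredRel_zlex : IsScatteredRel (zlex (L := L)) := by
  rintro ⟨f, hf⟩
  obtain ⟨μ, ⟨q₀, q₁, hq, -, hagree⟩, hmin⟩ := wellFounded_lt.has_min
    {ℓ | ∃ q q', q < q' ∧ f q ℓ < f q' ℓ ∧ AgreeAbove ℓ (f q) (f q')}
    (by obtain ⟨ℓ, h⟩ := (hf 0 1).1 one_pos; exact ⟨ℓ, 0, 1, one_pos, h⟩)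
  have hball : ∀ r ∈ Set.Ioo q₀ q₁, AgreeAbove μ (f q₀) (f r) := fun r hr =>
    hagree.of_zlex_of_zlex ((hf _ _).1 hr.1) ((hf _ _).1 hr.2)
  -- Inside the ball around `f q₀`, minimality of `μ` forces every comparison to happen at `μ`.
  have hmono : StrictMonoOn (fun r => f r μ) (Set.Ioo q₀ q₁) := by
    intro r hr r' hr' hrr'
    obtain ⟨w, hw, hagree'⟩ := (hf r r').1 hrr'
    obtain rfl : w = μ := le_antisymm
      (le_of_not_gt fun h => hw.ne (((hball r hr).symm.trans (hball r' hr')) w h))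
      (not_lt.1 (hmin w ⟨r, r', hrr', hw, hagree'⟩))
    exact hw
  refine Set.infinite_of_injOn_mapsTo hmono.injOn (fun r hr => ?_) (Set.Ioo_infinite hq)
    (Set.finite_Icc (f q₀ μ) (f q₁ μ))
  exact apply_mem_Icc_of_zlex_of_zlex ((hf _ _).1 hr.1) ((hf _ _).1 hr.2) hagree

theorem AgreeAbove.map (hg : g ∈ zAut L) {μ : L} {x y : L →₀ ℤ} (h : AgreeAbove μ x y) :
    AgreeAbove μ (g x) (g y) := by
  induction μ using WellFoundedLT.induction generalizing x y with
  | ind μ ih =>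
    rcases eq_or_ne x y with rfl | hne
    · exact AgreeAbove.refl μ _
    rcases zlex_or_zlex_of_ne hne with hxy | hyx
    · exact AgreeAbove.map_of_forall_lt hg (fun ν hν _ _ => ih ν hν) hxy h
    · exact (AgreeAbove.map_of_forall_lt hg (fun ν hν _ _ => ih ν hν) hyx h.symm).symm

theorem AgreeFrom.map (hg : g ∈ zAut L) {μ : L} {x y : L →₀ ℤ} (h : AgreeFrom μ x y) :
    AgreeFrom μ (g x) (g y) :=
  AgreeFrom.map_of_forall_lt (fun _ _ _ _ => AgreeAbove.map hg) h

theorem AgreeFrom.of_map (hg : g ∈ zAut L) {μ : L} {x y : L →₀ ℤ}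
    (h : AgreeFrom μ (g x) (g y)) : AgreeFrom μ x y := by
  simpa using AgreeFrom.map ((zAut L).inv_mem hg) h

def PreservesUnitSteps (f : (L →₀ ℤ) → (L →₀ ℤ)) : Prop :=
  ∀ (μ : L) (y : L →₀ ℤ), AgreeAbove μ (f (y + Finsupp.single μ 1)) (f y) ∧
    f (y + Finsupp.single μ 1) μ = f y μ + 1

theorem preservesUnitSteps_of_mem_zAut (hg : g ∈ zAut L) : PreservesUnitSteps g := by
  intro μ y
  have hy := agreeAbove_add_single μ y 1
  have hagree : AgreeAbove μ (g (y + Finsupp.single μ 1)) (g y) := hy.map hg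
  have hlt : zlex (g y) (g (y + Finsupp.single μ 1)) := (hg _ _).1 (zlex_add_single one_pos μ)
  refine ⟨hagree, ?_⟩
  have hne : g y μ ≠ g (y + Finsupp.single μ 1) μ := fun heq => by
    simpa using AgreeFrom.of_map hg (hagree.symm.agreeFrom heq) μ le_rfl
  by_contra hgap
  replace hgap : g y μ + 1 < g (y + Finsupp.single μ 1) μ := by
    have := apply_le_of_zlex hlt hagree.symm
    omega
  -- `z` lies strictly between the images, so `g⁻¹ z` lies strictly between `y` and its successor
  -- but can agree with neither of them at `μ`.
  set z := g y + Finsupp.single μ 1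
  have hc : zlex y (g.symm z) ∧ zlex (g.symm z) (y + Finsupp.single μ 1) := by
    refine ⟨(hg _ _).2 ?_, (hg _ _).2 ?_⟩
    · simpa using zlex_add_single one_pos μ
    · rw [Equiv.apply_symm_apply]
      exact ⟨μ, by simpa [z] using hgap, (agreeAbove_add_single μ (g y) 1).trans hagree.symm⟩
  have hcy : AgreeAbove μ y (g.symm z) := hy.symm.of_zlex_of_zlex hc.1 hc.2
  obtain ⟨hlo, hhi⟩ := apply_mem_Icc_of_zlex_of_zlex hc.1 hc.2 hy.symm
  rcases hlo.eq_or_lt with h | h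
  · simpa [z] using AgreeFrom.map hg (hcy.agreeFrom h) μ le_rfl
  · have := AgreeFrom.map hg ((hcy.symm.trans hy.symm).agreeFrom (by simp at hhi h ⊢; omega))
      μ le_rfl
    simp [z] at this
    omega

theorem surjective_of_preservesUnitSteps {f : (L →₀ ℤ) → (L →₀ ℤ)} (hf : PreservesUnitSteps f) :
    Function.Surjective f := by
  intro b
  by_contra! hb
  obtain ⟨μ, ⟨x₀, -, hagree⟩, hmin⟩ := wellFounded_lt.has_min
    {ℓ | ∃ x, f x ℓ ≠ b ℓ ∧ AgreeAbove ℓ (f x) b}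
    (by obtain ⟨ℓ, h⟩ := exists_agreeAbove_of_ne (hb 0); exact ⟨ℓ, 0, h⟩)
  set P : ℤ → Prop := fun k => AgreeAbove μ (f (x₀ + Finsupp.single μ k)) (f x₀) ∧
    f (x₀ + Finsupp.single μ k) μ = f x₀ μ + k
  have hsucc : ∀ k, f (x₀ + Finsupp.single μ (k + 1)) =
      f (x₀ + Finsupp.single μ k + Finsupp.single μ 1) := by
    simp [Finsupp.single_add, add_assoc]
  have hup : ∀ k, P k → P (k + 1) := fun k ih => by
    obtain ⟨h₁, h₂⟩ := hf μ (x₀ + Finsupp.single μ k)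
    exact ⟨hsucc k ▸ h₁.trans ih.1, by rw [hsucc, h₂, ih.2, add_assoc]⟩
  have hdown : ∀ k, P (k + 1) → P k := fun k ih => by
    obtain ⟨h₁, h₂⟩ := hf μ (x₀ + Finsupp.single μ k)
    rw [← hsucc] at h₁ h₂
    exact ⟨h₁.symm.trans ih.1, by linarith [ih.2]⟩
  have hladder : ∀ k, P k := fun k => Int.induction_on k (by simp [P, AgreeAbove.refl])
    (fun i => hup i) (fun i h => hdown _ (by simpa using h))
  set y := x₀ + Finsupp.single μ (b μ - f x₀ μ)
  have hfrom : AgreeFrom μ (f y) b :=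
    ((hladder _).1.trans hagree).agreeFrom (by rw [(hladder _).2]; ring)
  obtain ⟨ν, hνμ, hν⟩ := exists_lt_agreeAbove_of_agreeFrom hfrom (hb y)
  exact hmin ν ⟨y, hν⟩ hνμ

end WellFounded

theorem pointwiseLimitClosed_zAut {L : Type u} [LinearOrder L] [WellFoundedLT L] :
    PointwiseLimitClosed (zAut L) := by
  intro u f hu
  have hlex : ∀ a b, zlex a b ↔ zlex (f a) (f b) := fun a b => by
    obtain ⟨n, ha, hb⟩ := ((hu a).and (hu b)).exists
    rw [← ha, ← hb]
    exact (u n).2 a b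
  have hstep : PreservesUnitSteps f := fun μ y => by
    obtain ⟨n, ha, hb⟩ := ((hu y).and (hu (y + Finsupp.single μ 1))).exists
    rw [← ha, ← hb]
    exact preservesUnitSteps_of_mem_zAut (u n).2 μ y
  exact ⟨⟨Equiv.ofBijective f
    ⟨injective_of_zlex_iff hlex, surjective_of_preservesUnitSteps hstep⟩, hlex⟩, rfl⟩

section RatStep

open Filter

/-- The piecewise linear automorphism of `ℚ` that is the identity below `-1 / (n + 1)`, the
translation by `1` above `0`, and linear in between. -/
noncomputable def ratStep (n : ℕ) : ℚ ≃o ℚ :=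
  StrictMono.orderIsoOfSurjective (fun x => x + min 1 (max 0 ((n + 1) * x + 1)))
    (strictMono_id.add_monotone <| monotone_const.min <| monotone_const.max <|
      (monotone_id.const_mul (by positivity)).add_const 1)
    (by
      intro y
      have hn : (0 : ℚ) ≤ n := n.cast_nonneg
      rcases le_or_gt 1 y with h₁ | h₁
      · refine ⟨y - 1, ?_⟩
        have : 1 ≤ ((n : ℚ) + 1) * (y - 1) + 1 := by nlinarith
        simp [max_eq_right (zero_le_one.trans this), min_eq_left this]
      rcases le_or_gt (((n : ℚ) + 1) * y + 1) 0 with h₂ | h₂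
      · exact ⟨y, by simp [max_eq_left h₂]⟩
      · refine ⟨(y - 1) / (n + 2), ?_⟩
        have hx : ((n : ℚ) + 2) * ((y - 1) / (n + 2)) = y - 1 := by field_simp
        have hlo : 0 ≤ ((n : ℚ) + 1) * ((y - 1) / (n + 2)) + 1 := by nlinarith
        have hhi : ((n : ℚ) + 1) * ((y - 1) / (n + 2)) + 1 ≤ 1 := by nlinarith
        simp only [max_eq_right hlo, min_eq_right hhi]
        linarith)

theorem ratStep_apply (n : ℕ) (x : ℚ) : ratStep n x = x + min 1 (max 0 ((n + 1) * x + 1)) :=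
  rfl

def ratJump (x : ℚ) : ℚ := if x < 0 then x else x + 1

theorem eventually_ratStep_eq (x : ℚ) : ∀ᶠ n in atTop, ratStep n x = ratJump x := by
  unfold ratJump
  simp only [ratStep_apply]
  split_ifs with hx
  · obtain ⟨N, hN⟩ := exists_nat_gt (-x)⁻¹
    filter_upwards [eventually_ge_atTop N] with n hn
    have hn' : (N : ℚ) ≤ n := by exact_mod_cast hn
    have : ((n : ℚ) + 1) * x + 1 ≤ 0 := by
      have := (inv_lt_iff_one_lt_mul₀ (neg_pos.2 hx)).1 hN
      nlinarith
    simp [max_eq_left this]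
  · refine Eventually.of_forall fun n => ?_
    have : 1 ≤ ((n : ℚ) + 1) * x + 1 := by nlinarith [n.cast_nonneg (α := ℚ)]
    simp [max_eq_right (zero_le_one.trans this), min_eq_left this]

theorem ratJump_ne_half (x : ℚ) : ratJump x ≠ 2⁻¹ := by
  unfold ratJump
  split_ifs with hx <;> intro h <;> linarith

end RatStep

section NotWellFounded

variable {L : Type u} [LinearOrder L]

theorem nonempty_relIso_rat_of_dense {S : Type*} [Countable S] [Nonempty S] (r : S → S → Prop)
    [IsStrictTotalOrder S r] (hdense : ∀ a b, r a b → ∃ c, r a c ∧ r c b)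
    (hmax : ∀ a, ∃ b, r a b) (hmin : ∀ a, ∃ b, r b a) :
    Nonempty (r ≃r (· < · : ℚ → ℚ → Prop)) := by
  classical
  let _ := linearOrderOfSTO r
  have _ : DenselyOrdered S := ⟨hdense⟩
  have _ : NoMaxOrder S := ⟨hmax⟩
  have _ : NoMinOrder S := ⟨hmin⟩
  exact (Order.iso_of_countable_dense S ℚ).map OrderIso.toRelIsoLT

noncomputable def zlexSplit (M : Set L) [DecidablePred (· ∈ M)] (hM : IsUpperSet M) :
    zlex (L := L) ≃r Prod.Lex (zlex (L := M)) (zlex (L := {ℓ // ℓ ∉ M})) where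
  toEquiv := (Finsupp.equivCongrLeft (Equiv.sumCompl (· ∈ M))).symm.trans
    Finsupp.sumFinsuppEquivProdFinsupp
  map_rel_iff' := by
    intro a b
    simp only [Prod.lex_def]
    constructor
    · rintro (⟨⟨w, hwM⟩, hw, hagree⟩ | ⟨heq, ⟨w, hwM⟩, hw, hagree⟩)
      · refine ⟨w, by simpa using hw, fun ℓ hℓ => ?_⟩
        simpa using hagree ⟨ℓ, hM hℓ.le hwM⟩ hℓ
      · refine ⟨w, by simpa using hw, fun ℓ hℓ => ?_⟩
        by_cases hℓM : ℓ ∈ M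
        · simpa using DFunLike.congr_fun heq ⟨ℓ, hℓM⟩
        · simpa using hagree ⟨ℓ, hℓM⟩ hℓ
    · rintro ⟨w, hw, hagree⟩
      by_cases hwM : w ∈ M
      · exact Or.inl ⟨⟨w, hwM⟩, by simpa using hw, fun ℓ hℓ => by simpa using hagree ℓ hℓ⟩
      · have hM' : ∀ ℓ ∈ M, w < ℓ := fun ℓ hℓ => lt_of_not_ge fun h => hwM (hM h hℓ)
        exact Or.inr ⟨Finsupp.ext fun ℓ => by simpa using hagree ℓ (hM' ℓ ℓ.2), ⟨w, hwM⟩,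
          by simpa using hw, fun ℓ hℓ => by simpa using hagree ℓ hℓ⟩

theorem zlex_exists_between [NoMinOrder L] {a b : L →₀ ℤ} (h : zlex a b) :
    ∃ c, zlex a c ∧ zlex c b := by
  obtain ⟨w, hw, hagree⟩ := h
  obtain ⟨m, hm⟩ := exists_lt w
  refine ⟨b - Finsupp.single m 1, ⟨w, by simpa [Finsupp.single_apply, hm.ne] using hw,
    fun ℓ hℓ => ?_⟩, zlex_sub_single one_pos m⟩
  simpa [Finsupp.single_apply, (hm.trans hℓ).ne] using hagree ℓ hℓ

theorem nonempty_relIso_rat [Countable L] [Nonempty L] [NoMinOrder L] :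
    Nonempty (zlex (L := L) ≃r (· < · : ℚ → ℚ → Prop)) := by
  obtain ⟨ℓ⟩ := ‹Nonempty L›
  exact nonempty_relIso_rat_of_dense zlex (fun _ _ => zlex_exists_between)
    (fun a => ⟨_, zlex_add_single one_pos ℓ⟩) (fun a => ⟨_, zlex_sub_single one_pos ℓ⟩)

theorem exists_isUpperSet_relIso_rat [Countable L] (h : ¬ WellFoundedLT L) :
    ∃ M : Set L, IsUpperSet M ∧ Nonempty (zlex (L := M) ≃r (· < · : ℚ → ℚ → Prop)) := by
  obtain ⟨s, ⟨ℓ, hℓ⟩, hs⟩ : ∃ s : Set L, s.Nonempty ∧ ∀ m ∈ s, ∃ x ∈ s, x < m := by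
    simpa [WellFounded.wellFounded_iff_has_min] using fun hwf => h ⟨hwf⟩
  have _ : Nonempty (upperClosure s : Set L) := ⟨⟨ℓ, subset_upperClosure hℓ⟩⟩
  have _ : NoMinOrder (upperClosure s : Set L) := ⟨fun ⟨m, hm⟩ => by
    obtain ⟨t, ht, htm⟩ := mem_upperClosure.1 hm
    obtain ⟨t', ht', hlt⟩ := hs t ht
    exact ⟨⟨t', subset_upperClosure ht'⟩, hlt.trans_le htm⟩⟩
  exact ⟨upperClosure s, (upperClosure s).upper, nonempty_relIso_rat⟩

theorem not_isScatteredRel_zlex [Countable L] (h : ¬ WellFoundedLT L) :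
    ¬ IsScatteredRel (zlex (L := L)) := by
  classical
  obtain ⟨M, hM, ⟨e⟩⟩ := exists_isUpperSet_relIso_rat h
  refine not_not.2 ⟨fun q => (zlexSplit M hM).symm (e.symm q, 0), fun q q' => ?_⟩
  rw [(zlexSplit M hM).symm.map_rel_iff, Prod.lex_def]
  simpa [zlex_irrefl] using e.symm.map_rel_iff.symm

theorem not_pointwiseLimitClosed_zAut [Countable L] (h : ¬ WellFoundedLT L) :
    ¬ PointwiseLimitClosed (zAut L) := by
  classical
  obtain ⟨M, hM, ⟨e⟩⟩ := exists_isUpperSet_relIso_rat h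
  set Φ := zlexSplit M hM
  -- Conjugate `ratStep n` to `ℤ[M]` and let it act on the `M`-coordinates only.
  let ψ : ℕ → zlex (L := L) ≃r zlex (L := L) := fun n =>
    Φ.trans ((RelIso.prodLexCongr ((e.trans (ratStep n).toRelIsoLT).trans e.symm)
      (RelIso.refl _)).trans Φ.symm)
  intro hclosed
  obtain ⟨g, hg⟩ := hclosed (fun n => ⟨(ψ n).toEquiv, fun a b => (ψ n).map_rel_iff.symm⟩)
    (fun a => Φ.symm (e.symm (ratJump (e (Φ a).1)), (Φ a).2)) fun a => by
      filter_upwards [eventually_ratStep_eq (e (Φ a).1)] with n hn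
      simp [ψ, RelIso.prodLexCongr, Prod.map, hn]
  obtain ⟨a, ha⟩ := (g : Equiv.Perm (L →₀ ℤ)).surjective (Φ.symm (e.symm 2⁻¹, 0))
  simp only [hg, EmbeddingLike.apply_eq_iff_eq, Prod.mk.injEq] at ha
  exact ratJump_ne_half _ ha.1

end NotWellFounded

/-- For a countable linear order `L`, the following are equivalent: `L` is a well-order;
`ℤ[L]` is scattered; `Aut(ℤ[L])` (with the topology of pointwise convergence) is CLI. -/
theorem wellOrder_iff_scattered_iff_aut_CLI (L : Type u) [LinearOrder L] [Countable L] :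
    letI : TopologicalSpace (Equiv.Perm (L →₀ ℤ)) := permTop (L →₀ ℤ)
    ((WellFoundedLT L ↔ IsScatteredRel (zlex (L := L))) ∧
      (WellFoundedLT L ↔ IsCLI ↥(zAut L))) :=
  ⟨⟨fun _ => isScatteredRel_zlex, fun hs => by_contra fun h => not_isScatteredRel_zlex h hs⟩,
    ⟨fun _ => pointwiseLimitClosed_zAut.isCLI,
      fun hc => by_contra fun h => not_pointwiseLimitClosed_zAut h (.of_isCLI hc)⟩⟩
end

section
/- Let L be a linear order and let ā = (a₀, …, a_n) and b̄ = (b₀, …, b_n) be tuples in ℤ[L] with the same quantifier-free type in M_L, i.e., for all i, j ≤ n: a_i ≺* a_j iff b_i ≺* b_j, and for all ℓ ∈ L and z ∈ ℤ: E_{(ℓ,z)}(a_i, a_j) iff E_{(ℓ,z)}(b_i, b_j). Then there exists an automorphism φ of M_L — a bijection of ℤ[L] preserving ≺* and every relation E_{(ℓ,z)} — with φ(a_i) = b_i for all i ≤ n. -/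
universe u v w x

/-- The relation `E_{(ℓ,z)}` on `ℤ[L]`: `E_{(ℓ,z)}(a, b)` iff `b ℓ = a ℓ + z` and
`a ℓ' = b ℓ'` for all `ℓ' > ℓ`. -/
def Erel {L : Type u} [LinearOrder L] (ℓ : L) (z : ℤ) (a b : L →₀ ℤ) : Prop :=
  b ℓ = a ℓ + z ∧ ∀ ℓ' : L, ℓ < ℓ' → a ℓ' = b ℓ'

namespace MLAux

open Classical

variable {L : Type u} [LinearOrder L] {n : ℕ}

/-- The shift to apply at coordinate `ℓ` to a point `x`, determined by which `a i`
(if any) has the same tail above `ℓ` as `x`. -/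
noncomputable def sh (a b : Fin (n + 1) → (L →₀ ℤ)) (ℓ : L) (x : L →₀ ℤ) : ℤ :=
  if h : ∃ i, ∀ ℓ' : L, ℓ < ℓ' → x ℓ' = a i ℓ' then b h.choose ℓ - a h.choose ℓ else 0

/-- The candidate automorphism. -/
noncomputable def F (a b : Fin (n + 1) → (L →₀ ℤ)) (x : L →₀ ℤ) : L →₀ ℤ :=
  Finsupp.onFinset
    (x.support ∪ Finset.univ.biUnion (fun i => (a i).support ∪ (b i).support))
    (fun ℓ => x ℓ + sh a b ℓ x)
    (by
      intro ℓ hℓ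
      replace hℓ : x ℓ + sh a b ℓ x ≠ 0 := hℓ
      by_contra hc
      simp only [Finset.mem_union, Finsupp.mem_support_iff, Finset.mem_biUnion,
        Finset.mem_univ, true_and, not_or, not_exists, not_not] at hc
      obtain ⟨h1, h2⟩ := hc
      apply hℓ
      show x ℓ + sh a b ℓ x = 0
      rw [h1]
      unfold sh
      split
      next h =>
        obtain ⟨p, q⟩ := h2 h.choose
        omega
      next => ring)

theorem F_apply (a b : Fin (n + 1) → (L →₀ ℤ)) (x : L →₀ ℤ) (ℓ : L) :
    F a b x ℓ = x ℓ + sh a b ℓ x := rfl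

variable {a b : Fin (n + 1) → (L →₀ ℤ)}

/-- Consistency: if `a i` and `a j` agree above `ℓ`, the prescribed shifts at `ℓ` agree. -/
theorem consist (Hab : ∀ i j ℓ z, Erel ℓ z (a i) (a j) → Erel ℓ z (b i) (b j))
    {i j : Fin (n + 1)} {ℓ : L} (h : ∀ ℓ' : L, ℓ < ℓ' → a i ℓ' = a j ℓ') :
    b j ℓ - a j ℓ = b i ℓ - a i ℓ := by
  have := Hab i j ℓ (a j ℓ - a i ℓ) ⟨by ring, h⟩
  have h1 := this.1
  omega

theorem sh_spec (Hab : ∀ i j ℓ z, Erel ℓ z (a i) (a j) → Erel ℓ z (b i) (b j))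
    {i : Fin (n + 1)} {ℓ : L} {x : L →₀ ℤ} (h : ∀ ℓ' : L, ℓ < ℓ' → x ℓ' = a i ℓ') :
    sh a b ℓ x = b i ℓ - a i ℓ := by
  have hex : ∃ i, ∀ ℓ' : L, ℓ < ℓ' → x ℓ' = a i ℓ' := ⟨i, h⟩
  rw [sh, dif_pos hex]
  have hj := hex.choose_spec
  exact consist Hab (fun ℓ' hℓ' => (h ℓ' hℓ').symm.trans (hj ℓ' hℓ'))

theorem sh_congr (Hab : ∀ i j ℓ z, Erel ℓ z (a i) (a j) → Erel ℓ z (b i) (b j))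
    {ℓ : L} {x y : L →₀ ℤ} (h : ∀ ℓ' : L, ℓ < ℓ' → x ℓ' = y ℓ') :
    sh a b ℓ x = sh a b ℓ y := by
  by_cases hex : ∃ i, ∀ ℓ' : L, ℓ < ℓ' → y ℓ' = a i ℓ'
  · obtain ⟨i, hi⟩ := hex
    rw [sh_spec Hab hi, sh_spec Hab (fun ℓ' hℓ' => (h ℓ' hℓ').trans (hi ℓ' hℓ'))]
  · rw [sh, sh, dif_neg, dif_neg hex]
    rintro ⟨i, hi⟩
    exact hex ⟨i, fun ℓ' hℓ' => (h ℓ' hℓ').symm.trans (hi ℓ' hℓ')⟩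

theorem F_map (Hab : ∀ i j ℓ z, Erel ℓ z (a i) (a j) → Erel ℓ z (b i) (b j))
    (i : Fin (n + 1)) : F a b (a i) = b i := by
  ext ℓ
  rw [F_apply, sh_spec Hab (i := i) (fun ℓ' _ => rfl)]
  ring

/-- If `x` agrees with `a i` above `ℓ`, then `F a b x` agrees with `b i` above `ℓ`. -/
theorem tail_transfer (Hab : ∀ i j ℓ z, Erel ℓ z (a i) (a j) → Erel ℓ z (b i) (b j))
    {i : Fin (n + 1)} {ℓ : L} {x : L →₀ ℤ} (h : ∀ ℓ' : L, ℓ < ℓ' → x ℓ' = a i ℓ')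
    {ℓ' : L} (hℓ' : ℓ < ℓ') : F a b x ℓ' = b i ℓ' := by
  rw [F_apply, sh_spec Hab (i := i) (fun ℓ'' h'' => h ℓ'' (hℓ'.trans h'')), h ℓ' hℓ']
  ring

/-- A greatest point of difference above `ℓ` exists when two finsupps differ above `ℓ`. -/
theorem greatest_diff {x y : L →₀ ℤ} {ℓ : L} (h : ¬ ∀ ℓ' : L, ℓ < ℓ' → x ℓ' = y ℓ') :
    ∃ m : L, ℓ < m ∧ x m ≠ y m ∧ ∀ ℓ'' : L, m < ℓ'' → x ℓ'' = y ℓ'' := by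
  push_neg at h
  obtain ⟨ℓ₀, hℓ₀, hne⟩ := h
  set D : Finset L := (x.support ∪ y.support).filter (fun m => ℓ < m ∧ x m ≠ y m) with hD
  have hmem : ∀ m : L, m ∈ D ↔ ℓ < m ∧ x m ≠ y m := by
    intro m
    simp only [hD, Finset.mem_filter, Finset.mem_union, Finsupp.mem_support_iff,
      and_iff_right_iff_imp]
    rintro ⟨-, h2⟩
    by_contra hc
    push_neg at hc
    exact h2 (hc.1.trans hc.2.symm)
  have hne' : D.Nonempty := ⟨ℓ₀, (hmem ℓ₀).mpr ⟨hℓ₀, hne⟩⟩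
  refine ⟨D.max' hne', ((hmem _).mp (D.max'_mem hne')).1, ((hmem _).mp (D.max'_mem hne')).2, ?_⟩
  intro ℓ'' h''
  by_contra hc
  have : ℓ'' ∈ D := (hmem ℓ'').mpr ⟨((hmem _).mp (D.max'_mem hne')).1.trans h'', hc⟩
  exact absurd (D.le_max' ℓ'' this) (not_le.mpr h'')

/-- Converse tail transfer. -/
theorem tail_transfer_back (Hab : ∀ i j ℓ z, Erel ℓ z (a i) (a j) → Erel ℓ z (b i) (b j))
    {i : Fin (n + 1)} {ℓ : L} {x : L →₀ ℤ}
    (h : ∀ ℓ' : L, ℓ < ℓ' → F a b x ℓ' = b i ℓ') :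
    ∀ ℓ' : L, ℓ < ℓ' → x ℓ' = a i ℓ' := by
  by_contra hc
  obtain ⟨m, hm, hne, htail⟩ := greatest_diff hc
  have h1 : F a b x m = x m + (b i m - a i m) := by
    rw [F_apply, sh_spec Hab (i := i) htail]
  have h2 : F a b x m = b i m := h m hm
  omega

theorem F_inv (Hab : ∀ i j ℓ z, Erel ℓ z (a i) (a j) → Erel ℓ z (b i) (b j))
    (Hba : ∀ i j ℓ z, Erel ℓ z (b i) (b j) → Erel ℓ z (a i) (a j))
    (x : L →₀ ℤ) : F b a (F a b x) = x := by
  ext ℓ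
  rw [F_apply, F_apply]
  by_cases hex : ∃ i, ∀ ℓ' : L, ℓ < ℓ' → x ℓ' = a i ℓ'
  · obtain ⟨i, hi⟩ := hex
    rw [sh_spec Hab hi, sh_spec Hba (i := i) (fun ℓ' hℓ' => tail_transfer Hab hi hℓ')]
    ring
  · rw [sh, dif_neg hex, sh, dif_neg]
    · ring
    · rintro ⟨i, hi⟩
      exact hex ⟨i, tail_transfer_back Hab hi⟩

theorem F_zlex (Hab : ∀ i j ℓ z, Erel ℓ z (a i) (a j) → Erel ℓ z (b i) (b j))
    {x y : L →₀ ℤ} (h : zlex x y) : zlex (F a b x) (F a b y) := by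
  obtain ⟨ℓ, h1, h2⟩ := h
  refine ⟨ℓ, ?_, ?_⟩
  · rw [F_apply, F_apply, sh_congr Hab h2]
    omega
  · intro ℓ' hℓ'
    rw [F_apply, F_apply, h2 ℓ' hℓ',
      sh_congr Hab (fun ℓ'' h'' => h2 ℓ'' (hℓ'.trans h''))]

theorem F_Erel (Hab : ∀ i j ℓ z, Erel ℓ z (a i) (a j) → Erel ℓ z (b i) (b j))
    {m : L} {z : ℤ} {x y : L →₀ ℤ} (h : Erel m z x y) :
    Erel m z (F a b x) (F a b y) := by
  obtain ⟨h1, h2⟩ := h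
  refine ⟨?_, ?_⟩
  · rw [F_apply, F_apply, sh_congr Hab h2, h1]
    ring
  · intro ℓ' hℓ'
    rw [F_apply, F_apply, h2 ℓ' hℓ',
      sh_congr Hab (fun ℓ'' h'' => h2 ℓ'' (hℓ'.trans h''))]

end MLAux

/-- The structure `M_L = (ℤ[L], ≺*, (E_{(ℓ,z)})_{ℓ,z})` is ultrahomogeneous: any two
tuples with the same quantifier-free type are carried one to the other by an
automorphism. -/
theorem ML_ultrahomogeneous (L : Type u) [LinearOrder L] (n : ℕ)
    (a b : Fin (n + 1) → (L →₀ ℤ))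
    (hlt : ∀ i j : Fin (n + 1), zlex (a i) (a j) ↔ zlex (b i) (b j))
    (hE : ∀ (i j : Fin (n + 1)) (ℓ : L) (z : ℤ), Erel ℓ z (a i) (a j) ↔ Erel ℓ z (b i) (b j)) :
    ∃ φ : Equiv.Perm (L →₀ ℤ),
      (∀ x y : L →₀ ℤ, zlex x y ↔ zlex (φ x) (φ y)) ∧
      (∀ (ℓ : L) (z : ℤ) (x y : L →₀ ℤ), Erel ℓ z x y ↔ Erel ℓ z (φ x) (φ y)) ∧
      (∀ i : Fin (n + 1), φ (a i) = b i) := by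
  have Hab : ∀ i j ℓ z, Erel ℓ z (a i) (a j) → Erel ℓ z (b i) (b j) :=
    fun i j ℓ z => (hE i j ℓ z).mp
  have Hba : ∀ i j ℓ z, Erel ℓ z (b i) (b j) → Erel ℓ z (a i) (a j) :=
    fun i j ℓ z => (hE i j ℓ z).mpr
  refine ⟨⟨MLAux.F a b, MLAux.F b a, MLAux.F_inv Hab Hba, MLAux.F_inv Hba Hab⟩, ?_, ?_, ?_⟩
  · intro x y
    simp only [Equiv.coe_fn_mk]
    constructor
    · exact MLAux.F_zlex Hab
    · intro h
      have := MLAux.F_zlex Hba h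
      rwa [MLAux.F_inv Hab Hba, MLAux.F_inv Hab Hba] at this
  · intro ℓ z x y
    simp only [Equiv.coe_fn_mk]
    constructor
    · exact MLAux.F_Erel Hab
    · intro h
      have := MLAux.F_Erel Hba h
      rwa [MLAux.F_inv Hab Hba, MLAux.F_inv Hab Hba] at this
  · intro i
    simp only [Equiv.coe_fn_mk]
    exact MLAux.F_map Hab i
end

section
/- Let G be a Polish group with rk(G) ≤ α and let X be a Polish G-space. If x, y ∈ X satisfy x ⇝^β_G y for every β < α, then x ∼^1_G y. -/
universe u v w x

/-- The relation `x ⇝^α_V y` on a `G`-space `X`. -/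
def Squig {G : Type u} {X : Type w} [Group G] [TopologicalSpace G] [TopologicalSpace X]
    [MulAction G X] (V : Set G) (α : Ordinal.{v}) (x y : X) : Prop :=
  (α = 0 → x ∈ closure ((· • y) '' V) ∧ y ∈ closure ((· • x) '' V)) ∧
  (0 < α → ∀ (W : Set G) (U : Set X), IsOpen W → (1 : G) ∈ W → IsOpen U → (x ∈ U ∨ y ∈ U) →
    ∃ gx ∈ V, ∃ gy ∈ V, gx • x ∈ U ∧ gy • y ∈ U ∧
      ∀ β : Ordinal.{v}, ∀ _ : β < α, Squig W β (gx • x) (gy • y))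
termination_by α

/-- The relation `x ⪯^α_V y` on a `G`-space: `x ⪯^0_V y` iff `x ∈ cl(V • y)`, and for
`α > 0`, `x ⪯^α_V y` iff for every open identity neighbourhood `W` there is `v ∈ V`
with `v • y ∼^β_W x` for all `β < α`. -/
def PrecEq {G : Type u} {X : Type w} [Group G] [TopologicalSpace G] [TopologicalSpace X]
    [MulAction G X] (V : Set G) (α : Ordinal.{v}) (x y : X) : Prop :=
  (α = 0 → x ∈ closure ((· • y) '' V)) ∧
  (0 < α → ∀ W : Set G, IsOpen W → (1 : G) ∈ W → ∃ v ∈ V,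
    ∀ β : Ordinal.{v}, ∀ _ : β < α, PrecEq W β (v • y) x ∧ PrecEq W β x (v • y))
termination_by α

/-- The relation `x ∼^α_V y`: both `x ⪯^α_V y` and `y ⪯^α_V x`. -/
def SimEq {G : Type u} {X : Type w} [Group G] [TopologicalSpace G] [TopologicalSpace X]
    [MulAction G X] (V : Set G) (α : Ordinal.{v}) (x y : X) : Prop :=
  PrecEq V α x y ∧ PrecEq V α y x

/-!
Induction on `β`: if `rk(V, U) ≤ β` with `U` symmetric and `x ⇝^β_U y`, then `x ⇝^0_V k • y`
for some `k ∈ G`, which is the same as `k • y ∼^0_V x`. If `U ⊆ V` take `k = 1`. Otherwise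
`rk(V, U) ≤ β` is witnessed by some `W`; with `W' := W ∩ W⁻¹` the positive clause of `⇝` gives
`g, h ∈ U` with `g • x ⇝^γ_{W'} h • y` for all `γ < β`. Translating by `g⁻¹` gives
`x ⇝^γ_{g⁻¹ W' g} g⁻¹ h • y`, while `g⁻¹ ∈ U` yields some `γ < β` with `rk(V, g⁻¹ W g) ≤ γ`,
hence `rk(V, g⁻¹ W' g) ≤ γ`, and the induction continues with the symmetric set `g⁻¹ W' g`.
Since `rk(V, G) < α` for every `V`, doing this with `U = G` for every `V` is the definition of
`x ⪯^1_G y`; the same holds for `y ⪯^1_G x` because `⇝` is symmetric.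
-/

open Pointwise

section ConjSet

variable {G : Type u} [Group G]

theorem conjSet_eq_preimage (g : G) (W : Set G) :
    conjSet g W = (fun y => g⁻¹ * y * g) ⁻¹' W := by
  ext z
  constructor
  · rintro ⟨w, hw, rfl⟩
    simpa [mul_assoc] using hw
  · intro hz
    exact ⟨g⁻¹ * z * g, hz, by group⟩

theorem one_mem_conjSet (g : G) {W : Set G} (hW : (1 : G) ∈ W) : (1 : G) ∈ conjSet g W :=
  ⟨1, hW, by group⟩

theorem inv_mem_conjSet {g : G} {W : Set G} (hW : ∀ w ∈ W, w⁻¹ ∈ W) :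
    ∀ a ∈ conjSet g W, a⁻¹ ∈ conjSet g W := by
  rintro _ ⟨w, hw, rfl⟩
  exact ⟨w⁻¹, hW w hw, by group⟩

theorem conjSet_conjSet_inv (g : G) (W : Set G) : conjSet g (conjSet g⁻¹ W) = W := by
  ext z
  simp [conjSet_eq_preimage, mul_assoc]

theorem isOpen_conjSet [TopologicalSpace G] [ContinuousMul G] (g : G) {W : Set G}
    (hW : IsOpen W) : IsOpen (conjSet g W) := by
  rw [conjSet_eq_preimage]
  exact hW.preimage (by fun_prop)

variable {X : Type w} [MulAction G X]

theorem conj_smul_smul (g a : G) (x : X) : (g * a * g⁻¹) • g • x = g • a • x := by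
  simp [smul_smul, mul_assoc]

theorem smul_mem_closure_image_conjSet [TopologicalSpace X] [ContinuousConstSMul G X]
    {g : G} {W : Set G} {x y : X} (h : x ∈ closure ((· • y) '' W)) :
    g • x ∈ closure ((· • (g • y)) '' conjSet g W) := by
  have hset : (· • (g • y)) '' conjSet g W = g • ((· • y) '' W) := by
    simp only [conjSet, ← Set.image_smul, Set.image_image, conj_smul_smul]
  rw [hset, closure_smul]
  exact Set.smul_mem_smul_set h

end ConjSet

theorem RkLe.mono_right {G : Type u} [Group G] [TopologicalSpace G] {V U U' : Set G}
    {β : Ordinal.{v}} (h : RkLe V U β) (hU' : U' ⊆ U) : RkLe V U' β := by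
  rw [RkLe] at h ⊢
  rcases h with hUV | ⟨W, hWo, hW1, hW⟩
  · exact Or.inl (hU'.trans hUV)
  · exact Or.inr ⟨W, hWo, hW1, fun g hg => hW g (hU' hg)⟩

section Squig

variable {G : Type u} {X : Type w} [Group G] [TopologicalSpace G] [TopologicalSpace X]
  [MulAction G X] {V U : Set G} {β : Ordinal.{v}} {x y : X}

theorem squig_zero_iff :
    Squig V (0 : Ordinal.{v}) x y ↔
      x ∈ closure ((· • y) '' V) ∧ y ∈ closure ((· • x) '' V) := by
  rw [Squig]
  simp

theorem squig_iff_of_pos (hβ : 0 < β) :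
    Squig V β x y ↔ ∀ (W : Set G) (U : Set X), IsOpen W → (1 : G) ∈ W → IsOpen U →
      (x ∈ U ∨ y ∈ U) → ∃ gx ∈ V, ∃ gy ∈ V, gx • x ∈ U ∧ gy • y ∈ U ∧
        ∀ γ < β, Squig W γ (gx • x) (gy • y) := by
  rw [Squig]
  simp [hβ, hβ.ne']

theorem simEq_zero_iff_squig_zero :
    SimEq V (0 : Ordinal.{v}) x y ↔ Squig V (0 : Ordinal.{v}) x y := by
  rw [squig_zero_iff, SimEq, PrecEq, PrecEq]
  simp

theorem precEq_one_iff :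
    PrecEq V (1 : Ordinal.{v}) x y ↔
      ∀ W : Set G, IsOpen W → (1 : G) ∈ W → ∃ v ∈ V, SimEq W (0 : Ordinal.{v}) (v • y) x := by
  rw [PrecEq]
  simp [SimEq]

theorem Squig.symm (h : Squig V β x y) : Squig V β y x := by
  induction β using WellFoundedLT.induction generalizing V x y with
  | _ β IH =>
  rcases eq_zero_or_pos β with rfl | hβ
  · exact squig_zero_iff.2 (squig_zero_iff.1 h).symm
  · rw [squig_iff_of_pos hβ] at h ⊢
    intro W U hW hW1 hU hyx
    obtain ⟨gx, hgx, gy, hgy, hgxU, hgyU, hrec⟩ := h W U hW hW1 hU hyx.symm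
    exact ⟨gy, hgy, gx, hgx, hgyU, hgxU, fun γ hγ => IH γ hγ (hrec γ hγ)⟩

theorem Squig.mono (h : Squig U β x y) (hUV : U ⊆ V) : Squig V β x y := by
  rcases eq_zero_or_pos β with rfl | hβ
  · have hmono {a b : X} : a ∈ closure ((· • b) '' U) → a ∈ closure ((· • b) '' V) :=
      fun ha => closure_mono (Set.image_mono hUV) ha
    exact squig_zero_iff.2 ⟨hmono (squig_zero_iff.1 h).1, hmono (squig_zero_iff.1 h).2⟩
  · rw [squig_iff_of_pos hβ] at h ⊢
    intro W O hW hW1 hO hxy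
    obtain ⟨gx, hgx, gy, hgy, hrest⟩ := h W O hW hW1 hO hxy
    exact ⟨gx, hUV hgx, gy, hUV hgy, hrest⟩

theorem Squig.squig_zero (h : Squig V β x y) : Squig V (0 : Ordinal.{v}) x y := by
  rcases eq_zero_or_pos β with rfl | hβ
  · exact h
  rw [squig_iff_of_pos hβ] at h
  refine squig_zero_iff.2
    ⟨mem_closure_iff.2 fun O hO hxO => ?_, mem_closure_iff.2 fun O hO hyO => ?_⟩
  · obtain ⟨_, -, gy, hgy, -, hgyO, -⟩ := h Set.univ O isOpen_univ trivial hO (Or.inl hxO)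
    exact ⟨gy • y, hgyO, gy, hgy, rfl⟩
  · obtain ⟨gx, hgx, _, -, hgxO, -, -⟩ := h Set.univ O isOpen_univ trivial hO (Or.inr hyO)
    exact ⟨gx • x, hgxO, gx, hgx, rfl⟩

theorem Squig.nonempty (h : Squig V β x y) : V.Nonempty :=
  Set.image_nonempty.1 (closure_nonempty_iff.1 ⟨x, (squig_zero_iff.1 h.squig_zero).1⟩)

theorem Squig.smul [ContinuousMul G] [ContinuousConstSMul G X] {W : Set G}
    (h : Squig W β x y) (g : G) : Squig (conjSet g W) β (g • x) (g • y) := by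
  induction β using WellFoundedLT.induction generalizing W x y with
  | _ β IH =>
  rcases eq_zero_or_pos β with rfl | hβ
  · rw [squig_zero_iff] at h ⊢
    exact ⟨smul_mem_closure_image_conjSet h.1, smul_mem_closure_image_conjSet h.2⟩
  rw [squig_iff_of_pos hβ] at h ⊢
  intro W' O hW' hW'1 hO hxy
  obtain ⟨gx, hgx, gy, hgy, hgxO, hgyO, hrec⟩ :=
    h (conjSet g⁻¹ W') ((g • ·) ⁻¹' O) (isOpen_conjSet _ hW') (one_mem_conjSet _ hW'1)
      (hO.preimage (continuous_const_smul g)) hxy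
  refine ⟨g * gx * g⁻¹, ⟨gx, hgx, rfl⟩, g * gy * g⁻¹, ⟨gy, hgy, rfl⟩, ?_, ?_, fun γ hγ => ?_⟩
  · rwa [conj_smul_smul]
  · rwa [conj_smul_smul]
  · simpa only [conj_smul_smul, conjSet_conjSet_inv] using IH γ hγ (hrec γ hγ)

theorem Squig.exists_squig_zero_smul_of_rkLe [IsTopologicalGroup G] [ContinuousConstSMul G X]
    (hsq : Squig U β x y) (hrk : RkLe V U β) (hU : ∀ g ∈ U, g⁻¹ ∈ U) :
    ∃ g : G, Squig V (0 : Ordinal.{v}) x (g • y) := by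
  induction β using WellFoundedLT.induction generalizing U x y with
  | _ β IH =>
  rw [RkLe] at hrk
  rcases hrk with hUV | ⟨W, hWo, hW1, hW⟩
  · exact ⟨1, by simpa using (hsq.mono hUV).squig_zero⟩
  obtain ⟨g₀, hg₀⟩ := hsq.nonempty
  obtain ⟨γ₀, hγ₀, -⟩ := hW g₀ hg₀
  have hβ : 0 < β := pos_of_gt hγ₀
  have hW' : ∀ w ∈ W ∩ W⁻¹, w⁻¹ ∈ W ∩ W⁻¹ := fun w hw => ⟨hw.2, by simpa using hw.1⟩
  obtain ⟨gx, hgx, gy, -, -, -, hrec⟩ := (squig_iff_of_pos hβ).1 hsq (W ∩ W⁻¹) Set.univ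
    (hWo.inter hWo.inv) ⟨hW1, by simpa using hW1⟩ isOpen_univ (Or.inl trivial)
  obtain ⟨γ, hγ, hrkγ⟩ := hW gx⁻¹ (hU gx hgx)
  have hsqγ : Squig (conjSet gx⁻¹ (W ∩ W⁻¹)) γ x (gx⁻¹ • gy • y) := by
    simpa only [inv_smul_smul] using (hrec γ hγ).smul gx⁻¹
  obtain ⟨g, hg⟩ := IH γ hγ hsqγ (hrkγ.mono_right (Set.image_mono Set.inter_subset_left))
    (inv_mem_conjSet hW')
  exact ⟨g * gx⁻¹ * gy, by simpa only [mul_smul] using hg⟩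

end Squig

theorem precEq_one_of_squig_of_isBalanced {G : Type u} {X : Type w} [Group G]
    [TopologicalSpace G] [IsTopologicalGroup G] [TopologicalSpace X] [MulAction G X]
    [ContinuousConstSMul G X] {α : Ordinal.{v}} (hbal : IsBalanced G α) {x y : X}
    (h : ∀ β < α, Squig (Set.univ : Set G) β x y) :
    PrecEq (Set.univ : Set G) (1 : Ordinal.{v}) x y := by
  refine precEq_one_iff.2 fun W hW hW1 => ?_
  obtain ⟨β, hβ, hrk⟩ := hbal W hW hW1
  obtain ⟨g, hg⟩ := (h β hβ).exists_squig_zero_smul_of_rkLe hrk fun _ _ => trivial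
  exact ⟨g, trivial, simEq_zero_iff_squig_zero.2 hg.symm⟩

theorem simEq_of_squig_of_isBalanced_general {G : Type u} {X : Type w}
    [Group G] [TopologicalSpace G] [IsTopologicalGroup G]
    [TopologicalSpace X] [MulAction G X] [ContinuousSMul G X]
    (α : Ordinal.{v}) (hbal : IsBalanced G α) (x y : X)
    (h : ∀ β : Ordinal.{v}, β < α → Squig (Set.univ : Set G) β x y) :
    SimEq (Set.univ : Set G) (1 : Ordinal.{v}) x y :=
  ⟨precEq_one_of_squig_of_isBalanced hbal h,
    precEq_one_of_squig_of_isBalanced hbal fun β hβ => (h β hβ).symm⟩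

/-- If `G` is an `α`-balanced Polish group acting on a Polish space `X` and
`x ⇝^β_G y` holds for all `β < α`, then `x ∼^1_G y`. -/
theorem simEq_of_squig_of_isBalanced {G : Type u} {X : Type w}
    [Group G] [TopologicalSpace G] [IsTopologicalGroup G] [PolishSpace G]
    [TopologicalSpace X] [PolishSpace X] [MulAction G X] [ContinuousSMul G X]
    (α : Ordinal.{v}) (hbal : IsBalanced G α) (x y : X)
    (h : ∀ β : Ordinal.{v}, β < α → Squig (Set.univ : Set G) β x y) :
    SimEq (Set.univ : Set G) (1 : Ordinal.{v}) x y :=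
  simEq_of_squig_of_isBalanced_general α hbal x y h
end
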